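/- arXiv:1807.02711 — 9 statements merged into one kernel-verified Lean document; each statement's English description precedes it below -/
import Mathlib

section
/- Suppose the inverse demand function f_Γ is such that the map Γ ↦ (s − Γ) f_Γ′(Γ)/f_Γ(Γ) (which is ≤ 0) is nondecreasing on [0, s), and the risk-weight satisfies α ∈ ( −s f_Γ′(0)/((1 − s f_Γ′(0)) θ_min), 1/θ_min ). Then any solution Γ : [τ, T] → ℝ of the liquidation ODE Γ̇(t) = −Z(t,Γ(t)) f_t′(t) f_Γ(Γ(t)) / (1 + Z(t,Γ(t)) f_t(t) f_Γ′(Γ(t))) with initial condition Γ(τ) = 0 satisfies Γ(t) ∈ [0, s) and Γ̇(t) ≥ 0 for all times t ∈ [τ, T]. -/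
/-!
With `c = (1 - αθ)/(αθ) > 0`, the liquidation ODE along the threshold reads
`Γ̇ = c (s - Γ) ρ(t) / D(Γ)`, where `ρ = -f_t'/f_t ≥ 0` is bounded on `[τ, T]` and
`D(γ) = 1 + c (s - γ) f_Γ'(γ)/f_Γ(γ)`. The lower bound on `α` says exactly that `D(0) > 0`;
monotonicity of `(s - γ) f_Γ'/f_Γ` and `D(s) = 1` give `D ≥ min (D(0), 1) > 0` on `[0, s]`, and
continuity gives `D > 0` slightly below `0`. Hence `Γ̇ ≥ 0` while `Γ ∈ (-δ, s]`, so `Γ` cannot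
cross below `0`; and on `[0, s)` we have `Γ̇ ≤ C (s - Γ)`, so `s - Γ` decays at most
exponentially and never vanishes.
-/

open Set Filter Topology

theorem nonneg_of_deriv_right_nonneg_of_mem_Ioo {f f' : ℝ → ℝ} {a b δ : ℝ} (hδ : 0 < δ)
    (hf : ContinuousOn f (Icc a b)) (hf' : ∀ x ∈ Ico a b, HasDerivWithinAt f (f' x) (Ici x) x)
    (ha : 0 ≤ f a) (hnear : ∀ x ∈ Ico a b, f x ∈ Ioo (-δ) 0 → 0 ≤ f' x) :
    ∀ ⦃x⦄, x ∈ Icc a b → 0 ≤ f x := by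
  intro x hx
  have hba : 0 < b - a + 1 := by linarith [hx.1.trans hx.2]
  -- `-f` is fenced by the line `ε (y - a + 1)`: on contact `-f y ∈ (0, δ)`, where `-f' ≤ 0 < ε`
  have hfence : ∀ ε ∈ Ioo 0 (δ / (b - a + 1)), -f x ≤ ε * (x - a + 1) := by
    rintro ε ⟨hε, hεδ⟩
    refine image_le_of_deriv_right_lt_deriv_boundary' (B := fun y => ε * (y - a + 1))
      (B' := fun _ => ε) hf.neg (fun y hy => (hf' y hy).neg)
      (by simp only [Pi.neg_apply]; nlinarith) (by fun_prop) (fun y _ => ?_) ?_ hx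
    · simpa using ((((hasDerivAt_id y).sub_const a).add_const 1).const_mul ε).hasDerivWithinAt
    · intro y hy hfy
      rw [Pi.neg_apply] at hfy
      have hεb : ε * (b - a + 1) < δ := (lt_div_iff₀ hba).mp hεδ
      have : f y ∈ Ioo (-δ) 0 := ⟨by nlinarith [hy.2], by nlinarith [hy.1]⟩
      linarith [hnear y hy this]
  have hlim : Tendsto (fun ε => ε * (x - a + 1)) (𝓝[>] 0) (𝓝 0) := by
    simpa using (tendsto_id.mul_const (x - a + 1)).mono_left (nhdsWithin_le_nhds (a := (0 : ℝ)))
  linarith [ge_of_tendsto hlim (eventually_of_mem (Ioo_mem_nhdsGT (div_pos hδ hba)) hfence)]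

theorem lt_of_deriv_right_le_mul_sub {f f' : ℝ → ℝ} {a b s C : ℝ}
    (hf : ContinuousOn f (Icc a b)) (hf' : ∀ x ∈ Ico a b, HasDerivWithinAt f (f' x) (Ici x) x)
    (ha : f a < s) (bound : ∀ x ∈ Ico a b, f x < s → f' x ≤ C * (s - f x)) :
    ∀ ⦃x⦄, x ∈ Icc a b → f x < s := by
  intro x hx
  set B : ℝ → ℝ := fun y => s - (s - f a) * Real.exp (-(C + 1) * (y - a)) with hB_def
  have hB : ∀ y, HasDerivAt B ((C + 1) * (s - B y)) y := fun y => by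
    refine ((((hasDerivAt_id y).sub_const a).const_mul (-(C + 1))).exp.const_mul
      (s - f a)).const_sub s |>.congr_deriv ?_
    simp only [hB_def, id]; ring
  have hB_lt : ∀ y, B y < s := fun y => by
    have := Real.exp_pos (-(C + 1) * (y - a))
    simp only [hB_def]; nlinarith
  refine (image_le_of_deriv_right_lt_deriv_boundary' hf hf' (by simp [hB_def])
    (fun y _ => (hB y).continuousAt.continuousWithinAt) (fun y _ => (hB y).hasDerivWithinAt)
    (fun y hy hfy => ?_) hx).trans_lt (hB_lt x)
  have hpos : 0 < s - f y := by linarith [hB_lt y]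
  calc f' y ≤ C * (s - f y) := bound y hy (hfy ▸ hB_lt y)
    _ < (C + 1) * (s - B y) := by rw [← hfy]; linarith

theorem MonotoneOn.min_le_of_mem_Icc {α β : Type*} [LinearOrder α] [LinearOrder β] {g : α → β}
    {a b x : α} (hg : MonotoneOn g (Ico a b)) (hx : x ∈ Icc a b) : min (g a) (g b) ≤ g x := by
  rcases hx.2.eq_or_lt with rfl | hxb
  · exact min_le_right _ _
  · exact (min_le_left _ _).trans (hg ⟨le_rfl, hx.1.trans_lt hxb⟩ ⟨hx.1, hxb⟩ hx.1)

theorem deriv_nonpos_of_antitoneOn_Ici {f : ℝ → ℝ} {a x : ℝ} (hf : AntitoneOn f (Ici a))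
    (hx : x ∈ Ici a) (hd : DifferentiableAt ℝ f x) : deriv f x ≤ 0 := by
  rw [← hd.derivWithin (uniqueDiffOn_Ici a x hx)]
  exact hf.derivWithin_nonpos

theorem exists_forall_neg_deriv_div_mem_Icc {f : ℝ → ℝ} {τ T : ℝ} (hf : ContDiff ℝ 1 f)
    (hanti : AntitoneOn f (Ici τ)) (hpos : ∀ t ∈ Icc τ T, 0 < f t) :
    ∃ K, ∀ t ∈ Icc τ T, -deriv f t / f t ∈ Icc 0 K := by
  obtain ⟨K, hK⟩ := isCompact_Icc.bddAbove_image
    ((hf.continuous_deriv le_rfl).neg.continuousOn.div hf.continuous.continuousOn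
      fun t ht => (hpos t ht).ne')
  refine ⟨K, fun t ht => ⟨div_nonneg ?_ (hpos t ht).le, hK ⟨t, ht, rfl⟩⟩⟩
  exact neg_nonneg.mpr
    (deriv_nonpos_of_antitoneOn_Ici hanti ht.1 (hf.differentiable one_ne_zero t))

theorem one_add_div_mul_pos_of_neg_div_lt {α θ e : ℝ} (hα : 0 < α) (hθ : 0 < θ) (he : e ≤ 0)
    (h : -e / ((1 - e) * θ) < α) : 0 < 1 + (1 - α * θ) / (α * θ) * e := by
  have hαθ : 0 < α * θ := mul_pos hα hθ
  have : -e < α * θ * (1 - e) := by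
    rw [div_lt_iff₀ (by nlinarith)] at h; linarith
  have hrw : 1 + (1 - α * θ) / (α * θ) * e = (α * θ + (1 - α * θ) * e) / (α * θ) := by
    field_simp
  rw [hrw]
  exact div_pos (by linarith) hαθ

theorem threshold_rate_eq {a s γ q q' f f' : ℝ} (ha : a ≠ 0) (hq : q ≠ 0) (hf : f ≠ 0) :
    -((1 - a) * (s - γ) / (a * q * f) * q' * f) / (1 + (1 - a) * (s - γ) / (a * q * f) * q * f')
      = (1 - a) / a * (s - γ) * (-q' / q) / (1 + (1 - a) / a * ((s - γ) * f' / f)) := by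
  congr 1 <;> field_simp

theorem mem_Ico_and_deriv_nonneg_of_eq_mul_sub_div {Γ Γ' ρ D : ℝ → ℝ} {τ T s c K d : ℝ}
    (hs : 0 < s) (hc : 0 ≤ c) (hd : 0 < d) (hD : ∀ γ ∈ Icc 0 s, d ≤ D γ)
    (hD0 : ContinuousAt D 0) (hρ : ∀ t ∈ Icc τ T, ρ t ∈ Icc 0 K) (hΓτ : Γ τ = 0)
    (hderiv : ∀ t ∈ Icc τ T, HasDerivAt Γ (Γ' t) t)
    (hrate : ∀ t ∈ Icc τ T, Γ' t = c * (s - Γ t) * ρ t / D (Γ t)) :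
    ∀ t ∈ Icc τ T, Γ t ∈ Ico 0 s ∧ 0 ≤ Γ' t := by
  have hΓc : ContinuousOn Γ (Icc τ T) := fun t ht => (hderiv t ht).continuousAt.continuousWithinAt
  have hΓd : ∀ t ∈ Ico τ T, HasDerivWithinAt Γ (Γ' t) (Ici t) t := fun t ht =>
    (hderiv t (Ico_subset_Icc_self ht)).hasDerivWithinAt
  have hrate_nonneg : ∀ t ∈ Icc τ T, Γ t ≤ s → 0 < D (Γ t) → 0 ≤ Γ' t := fun t ht hΓs hDΓ => by
    rw [hrate t ht]
    exact div_nonneg (mul_nonneg (mul_nonneg hc (by linarith)) (hρ t ht).1) hDΓ.le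
  obtain ⟨δ, hδ, hDnear⟩ := Metric.eventually_nhds_iff.mp
    (hD0.eventually (lt_mem_nhds (hd.trans_le (hD 0 ⟨le_rfl, hs.le⟩))))
  have hnonneg := nonneg_of_deriv_right_nonneg_of_mem_Ioo hδ hΓc hΓd hΓτ.ge fun t ht hΓt =>
    hrate_nonneg t (Ico_subset_Icc_self ht) (by linarith [hΓt.2]) (hDnear (by
      rw [Real.dist_eq, sub_zero, abs_lt]; exact ⟨hΓt.1, hΓt.2.trans hδ⟩))
  have hlt := lt_of_deriv_right_le_mul_sub (C := c * K / d) hΓc hΓd (hΓτ ▸ hs) fun t ht hΓt => by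
    have ht' := Ico_subset_Icc_self ht
    rw [hrate t ht']
    calc c * (s - Γ t) * ρ t / D (Γ t) ≤ c * (s - Γ t) * K / d := by
          gcongr
          · exact mul_nonneg (mul_nonneg hc (by linarith)) ((hρ t ht').1.trans (hρ t ht').2)
          · exact (hρ t ht').2
          · exact hD _ ⟨hnonneg ht', hΓt.le⟩
      _ = c * K / d * (s - Γ t) := by ring
  exact fun t ht => ⟨⟨hnonneg ht, hlt ht⟩,
    hrate_nonneg t ht (hlt ht).le (hd.trans_le (hD _ ⟨hnonneg ht, (hlt ht).le⟩))⟩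

theorem single_bank_monotone_liquidation_general
    (s α θmin τ T : ℝ)
    (hs : 0 < s)
    (hθmin : 0 < θmin) (hα : 0 < α) (hαθ : α * θmin < 1)
    (hτ : 0 ≤ τ)
    (ft fΓ : ℝ → ℝ)
    (hftC : ContDiff ℝ 1 ft) (hftanti : AntitoneOn ft (Ici 0))
    (hftmem : ∀ t ∈ Ici (0 : ℝ), ft t ∈ Ioc (0 : ℝ) 1)
    (hfΓC : ContDiff ℝ 2 fΓ) (hfΓanti : Antitone fΓ)
    (hfΓpos : ∀ γ, 0 < fΓ γ) (hfΓ0 : fΓ 0 = 1)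
    -- key assumption on the inverse demand function
    (hmono : MonotoneOn (fun γ => (s - γ) * deriv fΓ γ / fΓ γ) (Ico 0 s))
    -- key assumption on the risk-weight
    (hαmem : α ∈ Ioo (-(s * deriv fΓ 0) / ((1 - s * deriv fΓ 0) * θmin)) (1 / θmin))
    -- the map `Z`
    (Z : ℝ → ℝ → ℝ)
    (hZ : ∀ t γ, Z t γ =
      if τ ≤ t then ((1 - α * θmin) * (s - γ)) / (α * θmin * ft t * fΓ γ) else 0)
    -- a solution of the liquidation ODE on `[τ, T]` with `Γ(τ) = 0`
    (Γ Γ' : ℝ → ℝ)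
    (hΓτ : Γ τ = 0)
    (hderiv : ∀ t ∈ Icc τ T, HasDerivAt Γ (Γ' t) t)
    (hODE : ∀ t ∈ Icc τ T, Γ' t =
      -(Z t (Γ t) * deriv ft t * fΓ (Γ t)) /
        (1 + Z t (Γ t) * ft t * deriv fΓ (Γ t))) :
    ∀ t ∈ Icc τ T, Γ t ∈ Ico 0 s ∧ 0 ≤ Γ' t := by
  set a := α * θmin
  have ha : 0 < a := mul_pos hα hθmin
  have hc : 0 < (1 - a) / a := div_pos (by linarith) ha
  set G : ℝ → ℝ := fun γ => (s - γ) * deriv fΓ γ / fΓ γ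
  have hft : ∀ t ∈ Icc τ T, 0 < ft t := fun t ht => (hftmem t (hτ.trans ht.1)).1
  obtain ⟨K, hK⟩ :=
    exists_forall_neg_deriv_div_mem_Icc hftC (hftanti.mono (Ici_subset_Ici.mpr hτ)) hft
  have hD0 : 0 < 1 + (1 - a) / a * G 0 := by
    simpa [G, hfΓ0] using one_add_div_mul_pos_of_neg_div_lt hα hθmin
      (mul_nonpos_of_nonneg_of_nonpos hs.le hfΓanti.deriv_nonpos) hαmem.1
  have hGc : Continuous G := ((continuous_const.sub continuous_id).mul
    (hfΓC.continuous_deriv one_le_two)).div hfΓC.continuous fun γ => (hfΓpos γ).ne'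
  refine mem_Ico_and_deriv_nonneg_of_eq_mul_sub_div (D := fun γ => 1 + (1 - a) / a * G γ) hs hc.le
    (lt_min hD0 one_pos) (fun γ hγ => ?_) (by fun_prop) hK hΓτ hderiv fun t ht => ?_
  · simpa [G] using MonotoneOn.min_le_of_mem_Icc (g := fun γ => 1 + (1 - a) / a * G γ)
      (fun x hx y hy hxy => show 1 + (1 - a) / a * G x ≤ 1 + (1 - a) / a * G y by
        gcongr; exact hmono hx hy hxy) hγ
  · rw [hODE t ht, hZ, if_pos ht.1]
    exact threshold_rate_eq ha.ne' (hft t ht).ne' (hfΓpos _).ne'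

/-- **Lemma 3.1 (single bank monotonicity).**
If the inverse demand function `fΓ` is such that `γ ↦ (s - γ) fΓ'(γ)/fΓ(γ)` is
nondecreasing on `[0, s)` and the risk-weight satisfies
`α ∈ (-(s fΓ'(0))/((1 - s fΓ'(0)) θmin), 1/θmin)`, then any solution
`Γ : [τ, T] → ℝ` of the liquidation ODE
`Γ̇(t) = -(Z(t,Γ(t)) ft'(t) fΓ(Γ(t))) / (1 + Z(t,Γ(t)) ft(t) fΓ'(Γ(t)))`
with `Γ(τ) = 0` satisfies `Γ(t) ∈ [0, s)` and `Γ̇(t) ≥ 0` for all `t ∈ [τ, T]`. -/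
theorem single_bank_monotone_liquidation
    (s α θmin τ T : ℝ)
    (hs : 0 < s)
    (hθmin : 0 < θmin) (hα : 0 < α) (hαθ : α * θmin < 1)
    (hτ : 0 ≤ τ) (hτT : τ ≤ T)
    (ft fΓ : ℝ → ℝ)
    (hftC : ContDiff ℝ 1 ft) (hftanti : AntitoneOn ft (Ici 0))
    (hftmem : ∀ t ∈ Ici (0 : ℝ), ft t ∈ Ioc (0 : ℝ) 1) (hft0 : ft 0 = 1)
    (hfΓC : ContDiff ℝ 2 fΓ) (hfΓanti : Antitone fΓ)
    (hfΓpos : ∀ γ, 0 < fΓ γ) (hfΓ0 : fΓ 0 = 1)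
    -- key assumption on the inverse demand function
    (hmono : MonotoneOn (fun γ => (s - γ) * deriv fΓ γ / fΓ γ) (Ico 0 s))
    -- key assumption on the risk-weight
    (hαmem : α ∈ Ioo (-(s * deriv fΓ 0) / ((1 - s * deriv fΓ 0) * θmin)) (1 / θmin))
    -- the map `Z`
    (Z : ℝ → ℝ → ℝ)
    (hZ : ∀ t γ, Z t γ =
      if τ ≤ t then ((1 - α * θmin) * (s - γ)) / (α * θmin * ft t * fΓ γ) else 0)
    -- a solution of the liquidation ODE on `[τ, T]` with `Γ(τ) = 0`
    (Γ Γ' : ℝ → ℝ)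
    (hΓτ : Γ τ = 0)
    (hderiv : ∀ t ∈ Icc τ T, HasDerivAt Γ (Γ' t) t)
    (hODE : ∀ t ∈ Icc τ T, Γ' t =
      -(Z t (Γ t) * deriv ft t * fΓ (Γ t)) /
        (1 + Z t (Γ t) * ft t * deriv fΓ (Γ t))) :
    ∀ t ∈ Icc τ T, Γ t ∈ Ico 0 s ∧ 0 ≤ Γ' t :=
  single_bank_monotone_liquidation_general s α θmin τ T hs hθmin hα hαθ hτ ft fΓ hftC hftanti hftmem
    hfΓC hfΓanti hfΓpos hfΓ0 hmono hαmem Z hZ Γ Γ' hΓτ hderiv hODE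
end

section
/- Suppose for every asset k that the map Γ_k ↦ (M_k − Γ_k) f_{Γ,k}′(Γ_k)/f_{Γ,k}(Γ_k) (which is ≤ 0) is nondecreasing on [0, M_k), and that α_k ∈ ( −M_k f_{Γ,k}′(0)/((1 − M_k f_{Γ,k}′(0)) θ_min), 1/θ_min ). Then any solution Π : [0,T] → ℝⁿ of the proportional-liquidation clearing system satisfies Π(t) ∈ [0,1)ⁿ, Π̇(t) ∈ ℝ₊ⁿ, and q̇(t) ∈ −ℝ₊ᵐ for all times t ∈ [0,T]. -/
open Set Matrix Filter Topology

/-!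
Along a solution, `Π̇ = -Z q̇` (push `(1 + Z D sᵀ)⁻¹` through `Z`) and, by the chain rule,
`q̇ = a + D sᵀ Π̇` with `a = diag[f_t'] f_Γ ≤ 0` and `D = diag[f_t f_Γ'] ≤ 0`; hence `q̇ = a + N q̇`
with `N = -D sᵀ Z ≥ 0`. While `Π ∈ [0,1]ⁿ`, the rows of `Z` satisfy `Σ_k Z_ik φ_k ≤ 1 - Π_i` for
`φ_k = c_k f_{t,k} f_{Γ,k}` with `c_k = α_k θ_min / (1 - α_k θ_min)`, and the monotonicity of
`(M - γ) f_Γ'/f_Γ` together with the lower bound on `α_k` gives `N φ ≤ ρ φ` for some `ρ < 1`.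
A maximal-ratio argument in the `φ`-weighted sup norm then yields `q̇ ≤ 0`, `Π̇ ≥ 0` and
`Π̇ ≤ K (1 - Π)`, where `K` comes from a bound on `-f_t'/f_t` over `[0, T]`; so
`1 - Π_i ≥ e^{-K t} > 0`. The contraction condition is open in `Π`, and continuous induction
over `[0, T]` closes the argument.
-/

theorem Matrix.inv_one_add_mul_mul_eq_mul_inv_one_add_mul {m n α : Type*} [Fintype m] [Fintype n]
    [DecidableEq m] [DecidableEq n] [CommRing α] (A : Matrix m n α) (B : Matrix n m α) :
    (1 + A * B)⁻¹ * A = A * (1 + B * A)⁻¹ := by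
  have hdet : IsUnit (1 + A * B).det ↔ IsUnit (1 + B * A).det := by
    rw [det_one_add_mul_comm]
  by_cases h : IsUnit (1 + A * B).det
  · have hcomm : A * (1 + B * A) = (1 + A * B) * A := by
      rw [Matrix.mul_add, Matrix.add_mul, Matrix.mul_assoc, Matrix.mul_one, Matrix.one_mul]
    calc (1 + A * B)⁻¹ * A = (1 + A * B)⁻¹ * (A * (1 + B * A)) * (1 + B * A)⁻¹ := by
          rw [Matrix.mul_assoc, Matrix.mul_assoc, mul_nonsing_inv _ (hdet.mp h), Matrix.mul_one]
      _ = A * (1 + B * A)⁻¹ := by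
          rw [hcomm, ← Matrix.mul_assoc, nonsing_inv_mul _ h, Matrix.one_mul]
  · rw [nonsing_inv_apply_not_isUnit _ h, nonsing_inv_apply_not_isUnit _ (mt hdet.mpr h),
      Matrix.zero_mul, Matrix.mul_zero]

theorem Matrix.mulVec_le_mulVec_of_nonneg {κ ι α : Type*} [Fintype ι] [Semiring α]
    [PartialOrder α] [IsOrderedRing α] {N : Matrix κ ι α} (hN : ∀ k l, 0 ≤ N k l) {v w : ι → α}
    (hvw : v ≤ w) : N *ᵥ v ≤ N *ᵥ w := fun k =>
  Finset.sum_le_sum fun l _ => mul_le_mul_of_nonneg_left (hvw l) (hN k l)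

theorem le_smul_of_le_add_mulVec {κ : Type*} [Fintype κ] {N : Matrix κ κ ℝ} {b v φ : κ → ℝ}
    {ρ C : ℝ} (hN : ∀ k l, 0 ≤ N k l) (hφ : ∀ k, 0 < φ k) (hNφ : N *ᵥ φ ≤ ρ • φ) (hρ : ρ < 1)
    (hC : 0 ≤ C) (hb : b ≤ C • φ) (hv : v ≤ b + N *ᵥ v) : v ≤ (C / (1 - ρ)) • φ := by
  intro k
  obtain ⟨k₀, -, hk₀⟩ := Finset.exists_max_image Finset.univ (fun l => v l / φ l) ⟨k, by simp⟩
  set μ := v k₀ / φ k₀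
  have hvμ : v ≤ μ • φ := fun l => by
    simpa [div_le_iff₀ (hφ l)] using hk₀ l (Finset.mem_univ l)
  suffices hμC : μ ≤ C / (1 - ρ) by
    simpa using (hvμ k).trans (mul_le_mul_of_nonneg_right hμC (hφ k).le)
  rcases le_or_gt μ 0 with hμ | hμ
  · exact hμ.trans (div_nonneg hC (sub_pos.mpr hρ).le)
  have hNv : N *ᵥ v ≤ (μ * ρ) • φ := fun l => by
    calc (N *ᵥ v) l ≤ (N *ᵥ (μ • φ)) l := mulVec_le_mulVec_of_nonneg hN hvμ l
      _ = μ * (N *ᵥ φ) l := by rw [mulVec_smul]; rfl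
      _ ≤ μ * (ρ * φ l) := mul_le_mul_of_nonneg_left (hNφ l) hμ.le
      _ = (μ * ρ) • φ l := by simp [mul_assoc]
  have hk₀ : μ * φ k₀ ≤ (C + μ * ρ) * φ k₀ := by
    calc μ * φ k₀ = v k₀ := div_mul_cancel₀ _ (hφ k₀).ne'
      _ ≤ b k₀ + (N *ᵥ v) k₀ := hv k₀
      _ ≤ C * φ k₀ + μ * ρ * φ k₀ := add_le_add (hb k₀) (hNv k₀)
      _ = (C + μ * ρ) * φ k₀ := by ring
  rw [le_div_iff₀ (sub_pos.mpr hρ)]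
  nlinarith [le_of_mul_le_mul_right hk₀ (hφ k₀)]

theorem price_feedback_signs {ι κ : Type*} [Fintype ι] [Fintype κ] [DecidableEq κ]
    {Z : Matrix ι κ ℝ} {S : Matrix κ ι ℝ} {r p : ι → ℝ} {a d φ q' : κ → ℝ} {ρ C : ℝ}
    (hZ : ∀ i k, 0 ≤ Z i k) (hS : ∀ k i, 0 ≤ S k i) (hφ : ∀ k, 0 < φ k) (hZφ : Z *ᵥ φ ≤ r)
    (hd : d ≤ 0) (hdS : ∀ k, -d k * (S *ᵥ r) k ≤ ρ * φ k) (hρ : ρ < 1)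
    (ha : a ≤ 0) (hC : 0 ≤ C) (haC : -a ≤ C • φ)
    (hp : p = -(Z *ᵥ q')) (hq' : q' = a + d * (S *ᵥ p)) :
    q' ≤ 0 ∧ 0 ≤ p ∧ p ≤ (C / (1 - ρ)) • r := by
  set N := -(diagonal d * (S * Z)) with hN_def
  have hN : ∀ k l, 0 ≤ N k l := fun k l => by
    rw [show N k l = -(d k * ∑ j, S k j * Z j l) by
      rw [hN_def, Matrix.neg_apply, diagonal_mul, Matrix.mul_apply]]
    exact neg_nonneg.mpr <| mul_nonpos_of_nonpos_of_nonneg (hd k)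
        (Finset.sum_nonneg fun j _ => mul_nonneg (hS k j) (hZ j l))
  have hNv : ∀ v, N *ᵥ v = -(d * (S *ᵥ (Z *ᵥ v))) := fun v => by
    ext k
    simp [N, neg_mulVec, ← mulVec_mulVec, mulVec_diagonal]
  have hNφ : N *ᵥ φ ≤ ρ • φ := fun k => by
    rw [hNv]
    calc -(d k * (S *ᵥ (Z *ᵥ φ)) k) = -d k * (S *ᵥ (Z *ᵥ φ)) k := by ring
      _ ≤ -d k * (S *ᵥ r) k := mul_le_mul_of_nonneg_left
          (mulVec_le_mulVec_of_nonneg hS hZφ k) (neg_nonneg.mpr (hd k))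
      _ ≤ ρ * φ k := hdS k
  have hq'N : q' = a + N *ᵥ q' := by rw [hNv, ← mul_neg, ← mulVec_neg, ← hp, ← hq']
  have hq'_nonpos : q' ≤ 0 := by
    simpa using le_smul_of_le_add_mulVec hN hφ hNφ hρ le_rfl (by simpa using ha) hq'N.le
  have hq'_bound : -q' ≤ (C / (1 - ρ)) • φ := by
    refine le_smul_of_le_add_mulVec hN hφ hNφ hρ hC haC (le_of_eq ?_)
    rw [mulVec_neg]
    nth_rw 1 [hq'N]
    rw [neg_add]
  have hp' : p = Z *ᵥ -q' := by rw [hp, mulVec_neg]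
  refine ⟨hq'_nonpos, ?_, ?_⟩
  · simpa [hp'] using mulVec_le_mulVec_of_nonneg hZ (neg_nonneg.mpr hq'_nonpos)
  · calc p ≤ Z *ᵥ ((C / (1 - ρ)) • φ) := hp' ▸ mulVec_le_mulVec_of_nonneg hZ hq'_bound
      _ = (C / (1 - ρ)) • (Z *ᵥ φ) := mulVec_smul _ _ _
      _ ≤ (C / (1 - ρ)) • r :=
          smul_le_smul_of_nonneg_left hZφ (div_nonneg hC (sub_pos.mpr hρ).le)

theorem monotoneOn_Icc_of_hasDerivAt_nonneg {f f' : ℝ → ℝ} {a b : ℝ}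
    (hf : ∀ t ∈ Icc a b, HasDerivAt f (f' t) t) (hf' : ∀ t ∈ Ioo a b, 0 ≤ f' t) :
    MonotoneOn f (Icc a b) :=
  monotoneOn_of_hasDerivWithinAt_nonneg (convex_Icc a b)
    (fun t ht => (hf t ht).continuousAt.continuousWithinAt)
    (fun t ht => (hf t (interior_subset ht)).hasDerivWithinAt)
    (fun t ht => hf' t (by rwa [interior_Icc] at ht))

theorem le_mul_exp_of_hasDerivAt {g g' : ℝ → ℝ} {a b K : ℝ} (hab : a ≤ b)
    (hg : ∀ t ∈ Icc a b, HasDerivAt g (g' t) t) (hg' : ∀ t ∈ Ioo a b, -(K * g t) ≤ g' t) :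
    g a ≤ g b * Real.exp (K * (b - a)) := by
  have hmono : MonotoneOn (fun t => g t * Real.exp (K * (t - a))) (Icc a b) := by
    refine monotoneOn_Icc_of_hasDerivAt_nonneg
      (fun t ht => (hg t ht).mul (((hasDerivAt_id t).sub_const a).const_mul K).exp) fun t ht => ?_
    have := hg' t ht
    have := Real.exp_pos (K * (t - a))
    simp only [id, mul_one]
    nlinarith
  simpa using hmono (left_mem_Icc.mpr hab) (right_mem_Icc.mpr hab) hab

theorem forall_mem_Icc_of_forall_Ico {P : ℝ → Prop} {a b : ℝ}
    (hstep : ∀ t ∈ Icc a b, (∀ u ∈ Ico a t, P u) → P t)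
    (hopen : ∀ t ∈ Ico a b, P t → ∀ᶠ u in 𝓝[>] t, P u) :
    ∀ t ∈ Icc a b, P t := by
  -- `P` itself need not be closed, but "`P` holds on `[a, t)`" is a closed condition on `t`.
  set s := {t | ∀ u ∈ Ico a t, P u}
  have hs : IsClosed s := by
    have : s = ⋂ u ∈ {u | a ≤ u ∧ ¬ P u}, Iic u := by
      ext t
      simp only [s, mem_ofPred_eq, mem_Ico, mem_iInter, mem_Iic, and_imp]
      exact forall_congr' fun u => ⟨fun h hau hu => not_lt.mp fun hut => hu (h hau hut),
        fun h hau hut => by_contra fun hu => (h hau hu).not_gt hut⟩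
    rw [this]
    exact isClosed_biInter fun u _ => isClosed_Iic
  have hsub : Icc a b ⊆ s := by
    refine (hs.inter isClosed_Icc).Icc_subset_of_forall_mem_nhdsGT_of_Icc_subset
      (fun u hu => absurd hu.2 (not_lt.mpr hu.1)) fun t ht hts => ?_
    have hbefore : ∀ u ∈ Ico a t, P u := hts ⟨ht.1, le_rfl⟩
    have hPt : P t := hstep t (Ico_subset_Icc_self ht) hbefore
    obtain ⟨m, hm, hafter⟩ := mem_nhdsGT_iff_exists_Ioo_subset.mp (hopen t ht hPt)
    filter_upwards [Ioo_mem_nhdsGT hm] with τ hτ u hu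
    rcases lt_trichotomy u t with hut | rfl | hut
    · exact hbefore u ⟨hu.1, hut⟩
    · exact hPt
    · exact hafter ⟨hut, hu.2.trans hτ.2⟩
  exact fun t ht => hstep t ht (hsub ht)

theorem mem_Ico_of_isOpen_of_forall_mem_Ico {ι : Type*} [Fintype ι] {p p' : ℝ → ι → ℝ}
    {G : Set (ι → ℝ)} {T K : ℝ} (hp : ∀ t ∈ Icc 0 T, HasDerivAt p (p' t) t) (hp0 : p 0 = 0)
    (hG : IsOpen G) (hbound : ∀ t ∈ Icc 0 T, p t ∈ G → 0 ≤ p' t ∧ p' t ≤ K • (1 - p t))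
    (hGmem : ∀ π : ι → ℝ, (∀ i, π i ∈ Ico 0 1) → π ∈ G) :
    ∀ t ∈ Icc 0 T, ∀ i, p t i ∈ Ico 0 1 := by
  have hstep : ∀ b ∈ Icc 0 T, (∀ u ∈ Ico 0 b, p u ∈ G) → ∀ i, p b i ∈ Ico 0 1 := by
    intro b hb hpG i
    have hderiv : ∀ t ∈ Icc 0 b, HasDerivAt (fun τ => p τ i) (p' t i) t := fun t ht =>
      hasDerivAt_pi.mp (hp t ⟨ht.1, ht.2.trans hb.2⟩) i
    have hbnd : ∀ t ∈ Ioo 0 b, 0 ≤ p' t ∧ p' t ≤ K • (1 - p t) := fun t ht =>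
      hbound t ⟨ht.1.le, ht.2.le.trans hb.2⟩ (hpG t ⟨ht.1.le, ht.2⟩)
    constructor
    · simpa [hp0] using monotoneOn_Icc_of_hasDerivAt_nonneg hderiv (fun t ht => (hbnd t ht).1 i)
        (left_mem_Icc.mpr hb.1) (right_mem_Icc.mpr hb.1) hb.1
    · have hexp := le_mul_exp_of_hasDerivAt (K := K) hb.1 (fun t ht => (hderiv t ht).const_sub 1)
        fun t ht => by
          linarith [(hbnd t ht).2 i, show (K • (1 - p t)) i = K * (1 - p t i) from rfl]
      simp only [hp0, Pi.zero_apply, sub_zero] at hexp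
      nlinarith [Real.exp_pos (K * b)]
  have hG_all : ∀ t ∈ Icc 0 T, p t ∈ G := forall_mem_Icc_of_forall_Ico
    (fun t ht hpG => hGmem _ (hstep t ht hpG)) fun t ht hpt =>
      ((hp t (Ico_subset_Icc_self ht)).continuousAt.eventually (hG.mem_nhds hpt)).filter_mono
        nhdsWithin_le_nhds
  exact fun t ht => hstep t ht fun u hu => hG_all u ⟨hu.1, hu.2.le.trans ht.2⟩

theorem hasDerivAt_mul_comp_sum_mul {ι : Type*} [Fintype ι] {f g : ℝ → ℝ} {w : ι → ℝ}
    {p : ℝ → ι → ℝ} {p' : ι → ℝ} {t : ℝ} (hp : HasDerivAt p p' t) (hf : DifferentiableAt ℝ f t)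
    (hg : DifferentiableAt ℝ g (∑ j, w j * p t j)) :
    HasDerivAt (fun τ => f τ * g (∑ j, w j * p τ j))
      (deriv f t * g (∑ j, w j * p t j) + f t * (deriv g (∑ j, w j * p t j) * ∑ j, w j * p' j))
      t :=
  hf.hasDerivAt.mul (hg.hasDerivAt.comp t
    (HasDerivAt.fun_sum fun j _ => (hasDerivAt_pi.mp hp j).const_mul (w j)))

theorem IsCompact.exists_neg_deriv_le_mul {κ : Type*} [Fintype κ] {s : Set ℝ} (hs : IsCompact s)
    {f : κ → ℝ → ℝ} {c : κ → ℝ} (hf : ∀ k, ContDiff ℝ 1 (f k)) (hfpos : ∀ k, ∀ t ∈ s, 0 < f k t)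
    (hc : ∀ k, 0 < c k) : ∃ C, 0 ≤ C ∧ ∀ k, ∀ t ∈ s, -deriv (f k) t ≤ C * (c k * f k t) := by
  have hcont : ContinuousOn (fun t k => -deriv (f k) t / (c k * f k t)) s :=
    continuousOn_pi.mpr fun k => ContinuousOn.div ((hf k).continuous_deriv le_rfl).neg.continuousOn
      (continuous_const.mul (hf k).continuous).continuousOn
      fun t ht => (mul_pos (hc k) (hfpos k t ht)).ne'
  obtain ⟨C, hC⟩ := hs.exists_bound_of_continuousOn hcont
  refine ⟨max C 0, le_max_right _ _, fun k t ht => ?_⟩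
  rw [← div_le_iff₀ (mul_pos (hc k) (hfpos k t ht))]
  exact (le_abs_self _).trans ((norm_le_pi_norm (fun k => -deriv (f k) t / (c k * f k t)) k).trans
    ((hC t ht).trans (le_max_left _ _)))

theorem exists_lt_one_forall_lt_mul {κ : Type*} [Finite κ] {x y : κ → ℝ}
    (hy : ∀ k, 0 < y k) (h : ∀ k, x k < y k) : ∃ ρ < 1, ∀ k, x k < ρ * y k := by
  have : ∀ᶠ ρ in 𝓝[<] (1 : ℝ), ∀ k, x k / y k < ρ := eventually_all.mpr fun k =>
    mem_of_superset (Ioo_mem_nhdsLT ((div_lt_one (hy k)).mpr (h k))) fun ρ hρ => hρ.1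
  obtain ⟨ρ, hρ, hρ1⟩ := (this.and self_mem_nhdsWithin).exists
  exact ⟨ρ, hρ1, fun k => (div_lt_iff₀ (hy k)).mp (hρ k)⟩

theorem neg_lt_div_one_sub_of_neg_div_lt {x a θ : ℝ} (hx : x ≤ 0) (hθ : 0 < θ)
    (haθ : a * θ < 1) (h : -x / ((1 - x) * θ) < a) : -x < a * θ / (1 - a * θ) := by
  rw [div_lt_iff₀ (by nlinarith)] at h
  rw [lt_div_iff₀ (sub_pos.mpr haθ)]
  nlinarith

theorem neg_deriv_mul_sub_le_of_monotoneOn {f : ℝ → ℝ} {M u S : ℝ} (hanti : Antitone f)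
    (hpos : ∀ γ, 0 < f γ) (hf0 : f 0 = 1)
    (hmono : MonotoneOn (fun γ => (M - γ) * deriv f γ / f γ) (Ico 0 M))
    (hu : 0 ≤ u) (huS : u ≤ S) (hSM : S ≤ M) :
    -deriv f u * (S - u) ≤ -(M * deriv f 0) * f u := by
  have hd : ∀ γ, deriv f γ ≤ 0 := fun γ => hanti.deriv_nonpos
  rcases (huS.trans hSM).lt_or_eq with huM | rfl
  · have hkey := hmono ⟨le_rfl, hu.trans_lt huM⟩ ⟨hu, huM⟩ hu
    simp only [sub_zero, hf0, div_one] at hkey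
    rw [le_div_iff₀ (hpos u)] at hkey
    nlinarith [hd u]
  · have hS : S = u := le_antisymm hSM huS
    rw [hS, sub_self, mul_zero, neg_mul]
    exact neg_nonneg.mpr (mul_nonpos_of_nonpos_of_nonneg
      (mul_nonpos_of_nonneg_of_nonpos hu (hd 0)) (hpos _).le)

theorem nonneg_and_sum_mul_le_of_eq_div {κ : Type*} [Fintype κ] {e r : ℝ} {w β g h z : κ → ℝ}
    (he : e ∈ Icc (0 : ℝ) 1) (hr : 0 ≤ r) (hw : ∀ k, 0 ≤ w k) (hβ : ∀ k, β k ∈ Ioo (0 : ℝ) 1)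
    (hg : ∀ k, 0 < g k) (hh : ∀ k, 0 < h k)
    (hz : ∀ k, z k = e * (w k * r * (1 - β k)) / ∑ l, w l * β l * g l * h l) :
    (∀ k, 0 ≤ z k) ∧ ∑ k, z k * (β k / (1 - β k) * g k * h k) ≤ r := by
  set D := ∑ l, w l * β l * g l * h l
  have hD : 0 ≤ D := Finset.sum_nonneg fun l _ =>
    mul_nonneg (mul_nonneg (mul_nonneg (hw l) (hβ l).1.le) (hg l).le) (hh l).le
  refine ⟨fun k => ?_, ?_⟩
  · rw [hz k]
    exact div_nonneg
      (mul_nonneg he.1 (mul_nonneg (mul_nonneg (hw k) hr) (sub_pos.mpr (hβ k).2).le)) hD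
  · have hterm : ∀ k, z k * (β k / (1 - β k) * g k * h k) = e * r / D * (w k * β k * g k * h k) :=
      fun k => by
        rw [hz k]
        field_simp [(sub_pos.mpr (hβ k).2).ne']
    calc ∑ k, z k * (β k / (1 - β k) * g k * h k) = e * r * (D / D) := by
          rw [Finset.sum_congr rfl fun k _ => hterm k, ← Finset.mul_sum]; ring
      _ ≤ 1 * r * 1 := by gcongr; exacts [he.2, div_self_le_one D]
      _ = r := by ring

section Clearing

variable {ι κ : Type*} [Fintype ι]

/-- The open condition on the liquidated fractions `π` under which the price feedback
`N = -diag[f_t f_Γ'] sᵀ Z` satisfies `N φ ≤ ρ φ` for `φ_k = c_k f_{t,k} f_{Γ,k}`: the first clause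
keeps `Z ≥ 0` and gives the row bound `Z φ ≤ 1 - π`, the second is `hdS` of
`price_feedback_signs` divided by `f_{t,k} > 0`. -/
def FeedbackContractive (s : ι → κ → ℝ) (fΓ : κ → ℝ → ℝ) (c : κ → ℝ) (ρ : ℝ) (π : ι → ℝ) :
    Prop :=
  (∀ i, π i < 1) ∧ ∀ k, -deriv (fΓ k) (∑ j, s j k * π j) * ∑ j, s j k * (1 - π j) <
    ρ * (c k * fΓ k (∑ j, s j k * π j))

theorem isOpen_setOf_feedbackContractive [Finite κ] {s : ι → κ → ℝ} {fΓ : κ → ℝ → ℝ}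
    {c : κ → ℝ} {ρ : ℝ} (hfΓ : ∀ k, ContDiff ℝ 1 (fΓ k)) :
    IsOpen {π | FeedbackContractive s fΓ c ρ π} := by
  simp only [FeedbackContractive, ofPred_and, ofPred_forall]
  refine (isOpen_iInter_of_finite fun i => isOpen_lt (continuous_apply i) continuous_const).inter
    (isOpen_iInter_of_finite fun k => isOpen_lt ?_ ?_)
  · have := (hfΓ k).continuous_deriv le_rfl
    fun_prop
  · have := (hfΓ k).continuous
    fun_prop

theorem feedbackContractive_of_forall_mem_Ico {s : ι → κ → ℝ} {fΓ : κ → ℝ → ℝ} {c M : κ → ℝ}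
    {ρ : ℝ} {π : ι → ℝ} (hs : ∀ i k, 0 ≤ s i k) (hM : ∀ k, ∑ i, s i k ≤ M k)
    (hfΓanti : ∀ k, Antitone (fΓ k)) (hfΓpos : ∀ k γ, 0 < fΓ k γ) (hfΓ0 : ∀ k, fΓ k 0 = 1)
    (hmono : ∀ k, MonotoneOn (fun γ => (M k - γ) * deriv (fΓ k) γ / fΓ k γ) (Ico 0 (M k)))
    (hρ : ∀ k, -(M k * deriv (fΓ k) 0) < ρ * c k) (hπ : ∀ i, π i ∈ Ico 0 1) :
    FeedbackContractive s fΓ c ρ π := by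
  refine ⟨fun i => (hπ i).2, fun k => ?_⟩
  have hu : 0 ≤ ∑ j, s j k * π j :=
    Finset.sum_nonneg fun j _ => mul_nonneg (hs j k) (hπ j).1
  have huS : ∑ j, s j k * π j ≤ ∑ j, s j k :=
    Finset.sum_le_sum fun j _ => mul_le_of_le_one_right (hs j k) (hπ j).2.le
  rw [show ∑ j, s j k * (1 - π j) = ∑ j, s j k - ∑ j, s j k * π j by
    simp [mul_sub, Finset.sum_sub_distrib]]
  calc _ ≤ -(M k * deriv (fΓ k) 0) * fΓ k (∑ j, s j k * π j) :=
        neg_deriv_mul_sub_le_of_monotoneOn (hfΓanti k) (hfΓpos k) (hfΓ0 k) (hmono k) hu huS (hM k)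
    _ < ρ * c k * fΓ k (∑ j, s j k * π j) := mul_lt_mul_of_pos_right (hρ k) (hfΓpos k _)
    _ = _ := mul_assoc _ _ _

theorem clearing_signs_of_feedbackContractive [Fintype κ] [DecidableEq ι] [DecidableEq κ]
    {s : ι → κ → ℝ} {α : κ → ℝ} {θmin ρ C T : ℝ} {ft fΓ : κ → ℝ → ℝ} {p p' η : ℝ → ι → ℝ}
    {q q' : ℝ → κ → ℝ} {Z : ℝ → Matrix ι κ ℝ} (hs : ∀ i k, 0 ≤ s i k)
    (hαθ : ∀ k, α k * θmin ∈ Ioo 0 1)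
    (hft : ∀ k, Differentiable ℝ (ft k)) (hftanti : ∀ k, AntitoneOn (ft k) (Ici 0))
    (hftpos : ∀ k, ∀ t ∈ Ici (0 : ℝ), 0 < ft k t) (hfΓ : ∀ k, Differentiable ℝ (fΓ k))
    (hfΓanti : ∀ k, Antitone (fΓ k)) (hfΓpos : ∀ k γ, 0 < fΓ k γ) (hρ : ρ < 1) (hC : 0 ≤ C)
    (hdecay : ∀ k, ∀ t ∈ Icc 0 T,
      -deriv (ft k) t ≤ C * (α k * θmin / (1 - α k * θmin) * ft k t))
    (hq : ∀ t k, q t k = ft k t * fΓ k (∑ j, s j k * p t j)) (hη : ∀ t i, η t i ∈ Icc 0 1)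
    (hZ : ∀ t i k, Z t i k = η t i * (s i k * (1 - p t i) * (1 - α k * θmin)) /
        (∑ l, s i l * (α l * θmin) * ft l t * fΓ l (∑ j, s j l * p t j)))
    (hpderiv : ∀ t ∈ Icc 0 T, HasDerivAt p (p' t) t)
    (hqderiv : ∀ t ∈ Icc 0 T, HasDerivAt q (q' t) t)
    (hpODE : ∀ t ∈ Icc 0 T, p' t =
      -(((1 : Matrix ι ι ℝ) +
          Z t * diagonal (fun k => ft k t * deriv (fΓ k) (∑ j, s j k * p t j)) *
            (of fun i k => s i k)ᵀ)⁻¹).mulVec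
        ((Z t).mulVec (fun k => deriv (ft k) t * fΓ k (∑ j, s j k * p t j))))
    (hqODE : ∀ t ∈ Icc 0 T, q' t =
      (((1 : Matrix κ κ ℝ) +
          diagonal (fun k => ft k t * deriv (fΓ k) (∑ j, s j k * p t j)) *
            (of fun i k => s i k)ᵀ * Z t)⁻¹).mulVec
        (fun k => deriv (ft k) t * fΓ k (∑ j, s j k * p t j))) :
    ∀ t ∈ Icc 0 T,
      p t ∈ {π | FeedbackContractive s fΓ (fun k => α k * θmin / (1 - α k * θmin)) ρ π} →
        q' t ≤ 0 ∧ 0 ≤ p' t ∧ p' t ≤ (C / (1 - ρ)) • (1 - p t) := by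
  intro t ht hG
  have hft_t : ∀ k, 0 < ft k t := fun k => hftpos k t ht.1
  have hdft : ∀ k, deriv (ft k) t ≤ 0 := fun k => by
    rw [← (hft k t).derivWithin (uniqueDiffOn_Ici 0 t ht.1)]
    exact (hftanti k).derivWithin_nonpos
  have hZrow : ∀ i, (∀ k, 0 ≤ Z t i k) ∧ ∑ k, Z t i k * (α k * θmin / (1 - α k * θmin) *
      ft k t * fΓ k (∑ j, s j k * p t j)) ≤ 1 - p t i := fun i =>
    nonneg_and_sum_mul_le_of_eq_div (hη t i) (sub_nonneg.mpr (hG.1 i).le) (hs i) hαθ hft_t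
      (fun k => hfΓpos k _) (hZ t i)
  have hp : p' t = -(Z t *ᵥ q' t) := by
    rw [hpODE t ht, hqODE t ht, Matrix.mul_assoc (Z t), mulVec_mulVec,
      inv_one_add_mul_mul_eq_mul_inv_one_add_mul, ← mulVec_mulVec]
  have hq' : q' t = (fun k => deriv (ft k) t * fΓ k (∑ j, s j k * p t j)) +
      (fun k => ft k t * deriv (fΓ k) (∑ j, s j k * p t j)) *
        ((of fun i k => s i k)ᵀ *ᵥ p' t) := by
    funext k
    have hqk := hasDerivAt_pi.mp (hqderiv t ht) k
    rw [show (fun τ => q τ k) = fun τ => ft k τ * fΓ k (∑ j, s j k * p τ j) from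
      funext fun τ => hq τ k] at hqk
    rw [hqk.unique (hasDerivAt_mul_comp_sum_mul (hpderiv t ht) (hft k t) (hfΓ k _))]
    simp [mulVec, dotProduct, mul_assoc]
  have hc : ∀ k, 0 < α k * θmin / (1 - α k * θmin) := fun k =>
    div_pos (hαθ k).1 (sub_pos.mpr (hαθ k).2)
  refine price_feedback_signs (fun i k => (hZrow i).1 k) (fun k i => hs i k)
    (fun k => mul_pos (mul_pos (hc k) (hft_t k)) (hfΓpos k _)) (fun i => (hZrow i).2)
    (fun k => mul_nonpos_of_nonneg_of_nonpos (hft_t k).le (hfΓanti k).deriv_nonpos) (fun k => ?_) hρ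
    (fun k => mul_nonpos_of_nonpos_of_nonneg (hdft k) (hfΓpos k _).le) hC (fun k => ?_) hp hq'
  · have := mul_le_mul_of_nonneg_left (hG.2 k).le (hft_t k).le
    simp only [mulVec, dotProduct, Pi.sub_apply, Pi.one_apply]
    linarith
  · have := mul_le_mul_of_nonneg_right (hdecay k t ht) (hfΓpos k (∑ j, s j k * p t j)).le
    simp only [Pi.neg_apply, Pi.smul_apply, smul_eq_mul]
    linarith

end Clearing

theorem nm_asset_monotone_liquidation_general
    (n m : ℕ)
    (T θmin : ℝ) (hθmin : 0 < θmin)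
    (x ℓ pbar αl : Fin n → ℝ) (s : Fin n → Fin m → ℝ) (α M : Fin m → ℝ)
    (hs : ∀ i k, 0 ≤ s i k)
    (hα : ∀ k, 0 < α k) (hαθ : ∀ k, α k * θmin < 1)
    (hM : ∀ k, ∑ i, s i k ≤ M k)
    (ft fΓ : Fin m → ℝ → ℝ)
    (hftC : ∀ k, ContDiff ℝ 1 (ft k)) (hftanti : ∀ k, AntitoneOn (ft k) (Ici 0))
    (hftmem : ∀ k, ∀ t ∈ Ici (0 : ℝ), ft k t ∈ Ioc (0 : ℝ) 1)
    (hfΓC : ∀ k, ContDiff ℝ 2 (fΓ k)) (hfΓanti : ∀ k, Antitone (fΓ k))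
    (hfΓpos : ∀ k γ, 0 < fΓ k γ) (hfΓ0 : ∀ k, fΓ k 0 = 1)
    -- key assumption on each inverse demand function
    (hmono : ∀ k, MonotoneOn (fun γ => (M k - γ) * deriv (fΓ k) γ / fΓ k γ)
      (Ico 0 (M k)))
    -- key assumption on the risk-weights
    (hαmem : ∀ k, α k ∈ Ioo
      (-(M k * deriv (fΓ k) 0) / ((1 - M k * deriv (fΓ k) 0) * θmin)) (1 / θmin))
    -- the solution: fractional liquidations `Π`, prices `q`, cash `Ψ`
    (Pi Pi' : ℝ → Fin n → ℝ) (Ψ : ℝ → Fin n → ℝ) (q q' : ℝ → Fin m → ℝ)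
    -- the price processes
    (hq : ∀ t k, q t k = ft k t * fΓ k (∑ j, s j k * Pi t j))
    -- initial conditions
    (hPi0 : Pi 0 = 0)
    -- the matrix `Z(t, diag[Π(t)]s)` (with the regulatory-threshold indicators)
    (Z : ℝ → Matrix (Fin n) (Fin m) ℝ)
    (hZ : ∀ t i k, Z t i k =
      (if max (x i + Ψ t i + (∑ l, s i l * (1 - Pi t i) * q t l) + ℓ i - pbar i) 0 /
          ((∑ l, α l * s i l * (1 - Pi t i) * q t l) + αl i * ℓ i) ≤ θmin
        then 1 else 0) *
      (s i k * (1 - Pi t i) * (1 - α k * θmin)) /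
        (∑ l, s i l * (α l * θmin) * ft l t * fΓ l (∑ j, s j l * Pi t j)))
    -- `Π`, `Ψ` and `q` are differentiable with the stated derivatives
    (hPideriv : ∀ t ∈ Icc 0 T, HasDerivAt Pi (Pi' t) t)
    (hqderiv : ∀ t ∈ Icc 0 T, HasDerivAt q (q' t) t)
    -- the clearing ODE for `Π`
    (hODE : ∀ t ∈ Icc 0 T, Pi' t =
      -(((1 : Matrix (Fin n) (Fin n) ℝ) +
          Z t * diagonal (fun k => ft k t * deriv (fΓ k) (∑ j, s j k * Pi t j)) *
            (of fun i k => s i k)ᵀ)⁻¹).mulVec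
        ((Z t).mulVec (fun k => deriv (ft k) t * fΓ k (∑ j, s j k * Pi t j))))
    -- the clearing ODE for `q`
    (hqODE : ∀ t ∈ Icc 0 T, q' t =
      (((1 : Matrix (Fin m) (Fin m) ℝ) +
          diagonal (fun k => ft k t * deriv (fΓ k) (∑ j, s j k * Pi t j)) *
            (of fun i k => s i k)ᵀ * Z t)⁻¹).mulVec
        (fun k => deriv (ft k) t * fΓ k (∑ j, s j k * Pi t j))) :
    ∀ t ∈ Icc 0 T, (∀ i, Pi t i ∈ Ico (0 : ℝ) 1) ∧ (∀ i, 0 ≤ Pi' t i) ∧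
      (∀ k, q' t k ≤ 0) := by
  have hαθ' : ∀ k, α k * θmin ∈ Ioo 0 1 := fun k => ⟨mul_pos (hα k) hθmin, hαθ k⟩
  have hc : ∀ k, 0 < α k * θmin / (1 - α k * θmin) := fun k =>
    div_pos (hαθ' k).1 (sub_pos.mpr (hαθ k))
  have hfΓC1 : ∀ k, ContDiff ℝ 1 (fΓ k) := fun k => (hfΓC k).of_le one_le_two
  obtain ⟨ρ, hρ, hρc⟩ := exists_lt_one_forall_lt_mul hc fun k =>
    neg_lt_div_one_sub_of_neg_div_lt
      (mul_nonpos_of_nonneg_of_nonpos ((Finset.sum_nonneg fun i _ => hs i k).trans (hM k))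
        (hfΓanti k).deriv_nonpos) hθmin (hαθ k) (hαmem k).1
  obtain ⟨C, hC, hdecay⟩ :=
    isCompact_Icc.exists_neg_deriv_le_mul hftC (fun k t ht => (hftmem k t ht.1).1) hc
  have hsigns := clearing_signs_of_feedbackContractive hs hαθ'
    (fun k => (hftC k).differentiable one_ne_zero) hftanti (fun k t ht => (hftmem k t ht).1)
    (fun k => (hfΓC1 k).differentiable one_ne_zero) hfΓanti hfΓpos hρ hC hdecay hq
    (fun t i => by split_ifs <;> norm_num) hZ hPideriv hqderiv hODE hqODE
  have hG := fun (π : Fin n → ℝ) (hπ : ∀ i, π i ∈ Ico 0 1) =>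
    feedbackContractive_of_forall_mem_Ico hs hM hfΓanti hfΓpos hfΓ0 hmono hρc hπ
  have hmem := mem_Ico_of_isOpen_of_forall_mem_Ico hPideriv hPi0
    (isOpen_setOf_feedbackContractive hfΓC1) (fun t ht hπ => (hsigns t ht hπ).2) hG
  intro t ht
  obtain ⟨hq'_nonpos, hPi'_nonneg, -⟩ := hsigns t ht (hG _ (hmem t ht))
  exact ⟨hmem t ht, hPi'_nonneg, hq'_nonpos⟩

/-- **Lemma 3.11 (n-bank, m-asset monotonicity).**
If, for every asset `k`, `γ ↦ (Mₖ - γ) fΓₖ'(γ)/fΓₖ(γ)` is nondecreasing on `[0, Mₖ)`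
and `αₖ ∈ (-(Mₖ fΓₖ'(0))/((1 - Mₖ fΓₖ'(0)) θmin), 1/θmin)`, then any solution
`Π : [0,T] → ℝⁿ` of the proportional-liquidation clearing system satisfies
`Π(t) ∈ [0,1)ⁿ`, `Π̇(t) ∈ ℝ₊ⁿ` and `q̇(t) ∈ -ℝ₊ᵐ` for all `t ∈ [0, T]`. -/
theorem nm_asset_monotone_liquidation
    (n m : ℕ) (hn : 0 < n) (hm : 0 < m)
    (T θmin : ℝ) (hT : 0 ≤ T) (hθmin : 0 < θmin)
    (x ℓ pbar αl : Fin n → ℝ) (s : Fin n → Fin m → ℝ) (α M : Fin m → ℝ)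
    (hx : ∀ i, 0 ≤ x i) (hℓ : ∀ i, 0 ≤ ℓ i) (hpbar : ∀ i, 0 ≤ pbar i)
    (hαl : ∀ i, 0 ≤ αl i) (hs : ∀ i k, 0 ≤ s i k)
    (hα : ∀ k, 0 < α k) (hαθ : ∀ k, α k * θmin < 1)
    (hM : ∀ k, ∑ i, s i k ≤ M k)
    (ft fΓ : Fin m → ℝ → ℝ)
    (hftC : ∀ k, ContDiff ℝ 1 (ft k)) (hftanti : ∀ k, AntitoneOn (ft k) (Ici 0))
    (hftmem : ∀ k, ∀ t ∈ Ici (0 : ℝ), ft k t ∈ Ioc (0 : ℝ) 1) (hft0 : ∀ k, ft k 0 = 1)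
    (hfΓC : ∀ k, ContDiff ℝ 2 (fΓ k)) (hfΓanti : ∀ k, Antitone (fΓ k))
    (hfΓpos : ∀ k γ, 0 < fΓ k γ) (hfΓ0 : ∀ k, fΓ k 0 = 1)
    -- key assumption on each inverse demand function
    (hmono : ∀ k, MonotoneOn (fun γ => (M k - γ) * deriv (fΓ k) γ / fΓ k γ)
      (Ico 0 (M k)))
    -- key assumption on the risk-weights
    (hαmem : ∀ k, α k ∈ Ioo
      (-(M k * deriv (fΓ k) 0) / ((1 - M k * deriv (fΓ k) 0) * θmin)) (1 / θmin))
    -- the solution: fractional liquidations `Π`, prices `q`, cash `Ψ`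
    (Pi Pi' : ℝ → Fin n → ℝ) (Ψ : ℝ → Fin n → ℝ) (q q' : ℝ → Fin m → ℝ)
    -- the price processes
    (hq : ∀ t k, q t k = ft k t * fΓ k (∑ j, s j k * Pi t j))
    -- initial conditions
    (hPi0 : Pi 0 = 0) (hΨ0 : Ψ 0 = 0)
    -- each bank satisfies the capital ratio requirement at time 0
    (hθ0 : ∀ i, θmin ≤
      max (x i + Ψ 0 i + (∑ k, s i k * (1 - Pi 0 i) * q 0 k) + ℓ i - pbar i) 0 /
        ((∑ k, α k * s i k * (1 - Pi 0 i) * q 0 k) + αl i * ℓ i))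
    -- the matrix `Z(t, diag[Π(t)]s)` (with the regulatory-threshold indicators)
    (Z : ℝ → Matrix (Fin n) (Fin m) ℝ)
    (hZ : ∀ t i k, Z t i k =
      (if max (x i + Ψ t i + (∑ l, s i l * (1 - Pi t i) * q t l) + ℓ i - pbar i) 0 /
          ((∑ l, α l * s i l * (1 - Pi t i) * q t l) + αl i * ℓ i) ≤ θmin
        then 1 else 0) *
      (s i k * (1 - Pi t i) * (1 - α k * θmin)) /
        (∑ l, s i l * (α l * θmin) * ft l t * fΓ l (∑ j, s j l * Pi t j)))
    -- `Π`, `Ψ` and `q` are differentiable with the stated derivatives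
    (hPideriv : ∀ t ∈ Icc 0 T, HasDerivAt Pi (Pi' t) t)
    (hΨderiv : ∀ t ∈ Icc 0 T,
      HasDerivAt Ψ (fun i => Pi' t i * ∑ k, s i k * q t k) t)
    (hqderiv : ∀ t ∈ Icc 0 T, HasDerivAt q (q' t) t)
    -- the clearing ODE for `Π`
    (hODE : ∀ t ∈ Icc 0 T, Pi' t =
      -(((1 : Matrix (Fin n) (Fin n) ℝ) +
          Z t * diagonal (fun k => ft k t * deriv (fΓ k) (∑ j, s j k * Pi t j)) *
            (of fun i k => s i k)ᵀ)⁻¹).mulVec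
        ((Z t).mulVec (fun k => deriv (ft k) t * fΓ k (∑ j, s j k * Pi t j))))
    -- the clearing ODE for `q`
    (hqODE : ∀ t ∈ Icc 0 T, q' t =
      (((1 : Matrix (Fin m) (Fin m) ℝ) +
          diagonal (fun k => ft k t * deriv (fΓ k) (∑ j, s j k * Pi t j)) *
            (of fun i k => s i k)ᵀ * Z t)⁻¹).mulVec
        (fun k => deriv (ft k) t * fΓ k (∑ j, s j k * Pi t j))) :
    ∀ t ∈ Icc 0 T, (∀ i, Pi t i ∈ Ico (0 : ℝ) 1) ∧ (∀ i, 0 ≤ Pi' t i) ∧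
      (∀ k, q' t k ≤ 0) :=
  nm_asset_monotone_liquidation_general n m T θmin hθmin x ℓ pbar αl s α M hs hα hαθ hM ft fΓ hftC
    hftanti hftmem hfΓC hfΓanti hfΓpos hfΓ0 hmono hαmem Pi Pi' Ψ q q' hq hPi0 Z hZ hPideriv hqderiv
    hODE hqODE
end

section
/- In the stress-test recursion (for arbitrary inverse demand functions f_{Γ,k} satisfying the standing assumptions), the final bounds admit the closed product form: for every bank i = 1,…,n, asset k, and time t ∈ [0,T], Γ̃_{ik}^n(t) = s_{ik} ( 1 − Π_{j=i}^n ( f_{t,k}(t ∧ τ̃_{j+1,k}) / f_{t,k}(t ∧ τ̃_{jk}) )^{(1 − α_kθ_min)/(α_kθ_min Λ̃_{jk})} ), where ∧ denotes the minimum and τ̃_{n+1,k} = T. -/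
open Set

noncomputable section

/-- **Closed product form of the stress-test bounds (Remark 4.3 / Corollary 4.2).**
For arbitrary inverse demand functions satisfying the standing assumptions, the
final liquidation bounds of the stress-test recursion satisfy, for every bank `i`,
asset `k` and time `t ∈ [0,T]`,
`Γ̃ⁿ_{ik}(t) = s_{ik} (1 - Π_{j=i}^n (f_{t,k}(t ∧ τ̃_{j+1,k})/f_{t,k}(t ∧ τ̃_{jk}))^{(1-αₖθmin)/(αₖθmin Λ̃_{jk})})`.
(Bank `i : Fin n` corresponds to bank `i+1` of the paper, so the paper's product
over `j = i,…,n` is the product over `j ∈ Finset.Icc (i+1) n`.) -/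
theorem stress_test_bound_product_form
    (n m : ℕ) (hn : 0 < n) (hm : 0 < m)
    (T θmin : ℝ) (hT : 0 ≤ T) (hθmin : 0 < θmin)
    (x ℓ pbar αl : Fin n → ℝ) (s : Fin n → Fin m → ℝ) (α : Fin m → ℝ)
    (hs : ∀ i k, 0 ≤ s i k)
    (hα : ∀ k, 0 < α k) (hαθ : ∀ k, α k * θmin < 1)
    (ft fΓ : Fin m → ℝ → ℝ)
    (hftC : ∀ k, ContDiff ℝ 1 (ft k)) (hftanti : ∀ k, AntitoneOn (ft k) (Ici 0))
    (hftmem : ∀ k, ∀ t ∈ Ici (0 : ℝ), ft k t ∈ Ioc (0 : ℝ) 1) (hft0 : ∀ k, ft k 0 = 1)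
    (hfΓC : ∀ k, ContDiff ℝ 2 (fΓ k)) (hfΓanti : ∀ k, Antitone (fΓ k))
    (hfΓpos : ∀ k γ, 0 < fΓ k γ) (hfΓ0 : ∀ k, fΓ k 0 = 1)
    -- the individual price thresholds `q̄ᵢ`, ordered nonincreasingly
    (qbar : Fin n → ℝ)
    (hqbar : ∀ i, qbar i =
      (pbar i - x i - (1 - αl i * θmin) * ℓ i) / (∑ k, (1 - α k * θmin) * s i k))
    (horder : ∀ i j : Fin n, i ≤ j → qbar j ≤ qbar i)
    -- the stress-test recursion
    (tτ tΛ : ℕ → Fin m → ℝ) (tΓ : ℕ → Fin n → Fin m → ℝ → ℝ)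
    (htΓ0 : ∀ i l t, tΓ 0 i l t = 0)
    (htτ0 : ∀ l, tτ 0 l = 0) (htτtop : ∀ l, tτ (n + 1) l = T)
    -- the approximate hitting times are nondecreasing and lie in `[0, T]`
    (htτmono : ∀ l, Monotone fun k => tτ k l)
    (htτmem : ∀ l, ∀ k ≤ n + 1, tτ k l ∈ Icc 0 T)
    (htτ : ∀ (k : Fin n) (l : Fin m), tτ ((k : ℕ) + 1) l =
      sInf {t | t ∈ Icc (tτ (k : ℕ) l) T ∧
        ft l t * fΓ l (∑ j ∈ Finset.univ.filter (fun j : Fin n => (j : ℕ) < (k : ℕ)),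
          tΓ (k : ℕ) j l t) ≤ qbar k})
    (htΛ : ∀ (k : Fin n) (l : Fin m), tΛ ((k : ℕ) + 1) l =
      1 + (1 - α l * θmin) / (α l * θmin) *
        (∑ j ∈ Finset.univ.filter (fun j : Fin n => (j : ℕ) ≤ (k : ℕ)),
          (s j l - tΓ (k : ℕ) j l (tτ ((k : ℕ) + 1) l))) *
        (deriv (fΓ l) (∑ j ∈ Finset.univ.filter (fun j : Fin n => (j : ℕ) < (k : ℕ)),
            tΓ (k : ℕ) j l (tτ ((k : ℕ) + 1) l)) /
          fΓ l (∑ j ∈ Finset.univ.filter (fun j : Fin n => (j : ℕ) < (k : ℕ)),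
            tΓ (k : ℕ) j l (tτ ((k : ℕ) + 1) l))))
    (htΓ : ∀ (k : Fin n) (i : Fin n) (l : Fin m) (t : ℝ),
      tΓ ((k : ℕ) + 1) i l t =
        if (i : ℕ) ≤ (k : ℕ) then
          (if t < tτ ((k : ℕ) + 1) l then tΓ (k : ℕ) i l t
          else s i l - (s i l - tΓ (k : ℕ) i l (tτ ((k : ℕ) + 1) l)) *
            (ft l t / ft l (tτ ((k : ℕ) + 1) l)) ^
              ((1 - α l * θmin) / (α l * θmin * tΛ ((k : ℕ) + 1) l)))
        else 0) :
    -- the closed product form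
    ∀ (i : Fin n) (k : Fin m), ∀ t ∈ Icc 0 T,
      tΓ n i k t = s i k *
        (1 - ∏ j ∈ Finset.Icc ((i : ℕ) + 1) n,
          (ft k (min t (tτ (j + 1) k)) / ft k (min t (tτ j k))) ^
            ((1 - α k * θmin) / (α k * θmin * tΛ j k))) := by
  have key : ∀ r, r ≤ n → ∀ (i : Fin n) (l : Fin m) (t : ℝ), t ∈ Icc (0:ℝ) T →
      tΓ r i l t = s i l * (1 - ∏ j ∈ Finset.Icc ((i:ℕ)+1) r,
        (ft l (if j = r then t else min t (tτ (j+1) l)) / ft l (min t (tτ j l))) ^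
          ((1 - α l * θmin) / (α l * θmin * tΛ j l))) := by
    intro r
    induction r with
    | zero =>
      intro _ i l t _
      rw [htΓ0, Finset.Icc_eq_empty (by omega), Finset.prod_empty]
      ring
    | succ r ih =>
      intro hr i l t ht
      have hrn : r < n := hr
      have hrec := htΓ ⟨r, hrn⟩ i l t
      simp only [Fin.val_mk] at hrec
      rw [hrec]
      have hτ : tτ (r+1) l ∈ Icc (0:ℝ) T := htτmem l (r+1) (by omega)
      have ht0 : (0:ℝ) ≤ t := ht.1
      by_cases hi : (i:ℕ) ≤ r
      · rw [if_pos hi]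
        by_cases hlt : t < tτ (r+1) l
        · rw [if_pos hlt, ih (le_of_lt hrn) i l t ht,
            Finset.prod_Icc_succ_top (by omega : (i:ℕ)+1 ≤ r+1)]
          have h1 : (ft l (if r+1 = r+1 then t else min t (tτ (r+1+1) l)) /
              ft l (min t (tτ (r+1) l))) ^
              ((1 - α l * θmin) / (α l * θmin * tΛ (r+1) l)) = 1 := by
            rw [if_pos rfl, min_eq_left hlt.le,
              div_self (ne_of_gt (hftmem l t ht0).1), Real.one_rpow]
          rw [h1, mul_one]
          have hprod : ∏ j ∈ Finset.Icc ((i:ℕ)+1) r,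
              (ft l (if j = r then t else min t (tτ (j+1) l)) / ft l (min t (tτ j l))) ^
                ((1 - α l * θmin) / (α l * θmin * tΛ j l)) =
              ∏ j ∈ Finset.Icc ((i:ℕ)+1) r,
              (ft l (if j = r+1 then t else min t (tτ (j+1) l)) / ft l (min t (tτ j l))) ^
                ((1 - α l * θmin) / (α l * θmin * tΛ j l)) := by
            apply Finset.prod_congr rfl
            intro j hj
            simp only [Finset.mem_Icc] at hj
            rw [if_neg (by omega : j ≠ r+1)]
            by_cases hjr : j = r
            · subst hjr
              rw [if_pos rfl, min_eq_left hlt.le]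
            · rw [if_neg hjr]
          rw [hprod]
        · push_neg at hlt
          rw [if_neg (not_lt.2 hlt), ih (le_of_lt hrn) i l (tτ (r+1) l) hτ,
            Finset.prod_Icc_succ_top (by omega : (i:ℕ)+1 ≤ r+1)]
          have hlast : (ft l (if r+1 = r+1 then t else min t (tτ (r+1+1) l)) /
              ft l (min t (tτ (r+1) l))) ^
              ((1 - α l * θmin) / (α l * θmin * tΛ (r+1) l)) =
              (ft l t / ft l (tτ (r+1) l)) ^
                ((1 - α l * θmin) / (α l * θmin * tΛ (r+1) l)) := by
            rw [if_pos rfl, min_eq_right hlt]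
          rw [hlast]
          have hprod : ∏ j ∈ Finset.Icc ((i:ℕ)+1) r,
              (ft l (if j = r+1 then t else min t (tτ (j+1) l)) / ft l (min t (tτ j l))) ^
                ((1 - α l * θmin) / (α l * θmin * tΛ j l)) =
              ∏ j ∈ Finset.Icc ((i:ℕ)+1) r,
              (ft l (if j = r then tτ (r+1) l else min (tτ (r+1) l) (tτ (j+1) l)) /
                ft l (min (tτ (r+1) l) (tτ j l))) ^
                ((1 - α l * θmin) / (α l * θmin * tΛ j l)) := by
            apply Finset.prod_congr rfl
            intro j hj
            simp only [Finset.mem_Icc] at hj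
            have hτj : tτ j l ≤ tτ (r+1) l := htτmono l (by omega : j ≤ r+1)
            have hτj1 : tτ (j+1) l ≤ tτ (r+1) l := htτmono l (by omega : j+1 ≤ r+1)
            rw [if_neg (by omega : j ≠ r+1), min_eq_right (hτj.trans hlt),
              min_eq_right hτj]
            by_cases hjr : j = r
            · subst hjr
              rw [if_pos rfl, min_eq_right (hτj1.trans hlt)]
            · rw [if_neg hjr, min_eq_right (hτj1.trans hlt), min_eq_right hτj1]
          rw [hprod]
          ring
      · rw [if_neg hi, Finset.Icc_eq_empty (by omega : ¬ (i:ℕ)+1 ≤ r+1),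
          Finset.prod_empty]
        ring
  intro i k t ht
  rw [key n le_rfl i k t ht]
  congr 2
  apply Finset.prod_congr rfl
  intro j hj
  simp only [Finset.mem_Icc] at hj
  by_cases hjn : j = n
  · subst hjn
    rw [if_pos rfl, htτtop, min_eq_left ht.2]
  · rw [if_neg hjn]
end
end

section
/- Suppose the inverse demand function for asset k is exponential, f_{Γ,k}(Γ) = exp(−b_k Γ) with b_k ≥ 0. Then the recursive quantities of the stress-test bound satisfy, for every i = 1,…,n, Λ̃_{ik} = 1 − b_k ((1 − α_kθ_min)/(α_kθ_min)) Σ_{j=1}^{i} s_{jk} Π_{h=j}^{i−1} ( f_{t,k}(τ̃_{h+1,k}) / f_{t,k}(τ̃_{hk}) )^{(1 − α_kθ_min)/(α_kθ_min Λ̃_{hk})}. -/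
open Set

/-!
The exponential inverse demand has constant logarithmic derivative `-b`, so the
recursion for `Λ̃` only involves the mass `s_j - Γ̃_j` not yet sold by each bank `j`
when the next bank defaults. After its own default at `τ̃_j` (before which it has
sold nothing), that mass is multiplied at every later default time `τ̃_{h+1}` by the
factor `(f_t(τ̃_{h+1}) / f_t(τ̃_h))^{(1-αθ)/(αθ Λ̃_h)}` of the explicit liquidation path.
-/

theorem Real.logDeriv_exp_comp {f : ℝ → ℝ} {x : ℝ} (hf : DifferentiableAt ℝ f x) :
    logDeriv (fun y => Real.exp (f y)) x = deriv f x := by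
  rw [logDeriv_apply, (hf.hasDerivAt.exp).deriv]
  field_simp

theorem logDeriv_exp_neg_mul (b x : ℝ) :
    logDeriv (fun y => Real.exp (-(b * y))) x = -b := by
  rw [Real.logDeriv_exp_comp (by fun_prop)]
  simp

theorem sub_liquidated_eq_mul_prod {n : ℕ} (s : Fin n → ℝ) (f : ℝ → ℝ) (τ e : ℕ → ℝ)
    (Γ : ℕ → Fin n → ℝ → ℝ) (hΓ0 : ∀ i t, Γ 0 i t = 0) (hτ : Monotone τ)
    (hΓ : ∀ (k i : Fin n) (t : ℝ), Γ ((k : ℕ) + 1) i t =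
      if (i : ℕ) ≤ (k : ℕ) then
        (if t < τ ((k : ℕ) + 1) then Γ (k : ℕ) i t
        else s i - (s i - Γ (k : ℕ) i (τ ((k : ℕ) + 1))) *
          (f t / f (τ ((k : ℕ) + 1))) ^ e ((k : ℕ) + 1))
      else 0) :
    ∀ k < n, ∀ j : Fin n, (j : ℕ) ≤ k →
      s j - Γ k j (τ (k + 1)) = s j * ∏ h ∈ Finset.Icc ((j : ℕ) + 1) k,
        (f (τ (h + 1)) / f (τ h)) ^ e h := by
  intro k
  induction k with
  | zero => simp [hΓ0]
  | succ q ih =>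
    intro hk j hj
    have hq : q < n := by omega
    rw [hΓ ⟨q, hq⟩ j]
    by_cases hjq : (j : ℕ) ≤ q
    · have hτq : ¬ τ (q + 1 + 1) < τ (q + 1) := not_lt.2 (hτ (Nat.le_succ _))
      simp only [if_pos hjq, if_neg hτq]
      rw [Finset.prod_Icc_succ_top (by omega), ← mul_assoc, ← ih hq j hjq]
      ring
    · have hjq' : (j : ℕ) = q + 1 := by omega
      simp [hjq']

theorem stress_test_Lambda_exponential_general
    (n m : ℕ)
    (θmin : ℝ)
    (s : Fin n → Fin m → ℝ) (α : Fin m → ℝ)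
    (ft fΓ : Fin m → ℝ → ℝ)
    -- the stress-test recursion
    (tτ tΛ : ℕ → Fin m → ℝ) (tΓ : ℕ → Fin n → Fin m → ℝ → ℝ)
    (htΓ0 : ∀ i l t, tΓ 0 i l t = 0)
    (htτmono : ∀ l, Monotone fun k => tτ k l)
    (htΛ : ∀ (k : Fin n) (l : Fin m), tΛ ((k : ℕ) + 1) l =
      1 + (1 - α l * θmin) / (α l * θmin) *
        (∑ j ∈ Finset.univ.filter (fun j : Fin n => (j : ℕ) ≤ (k : ℕ)),
          (s j l - tΓ (k : ℕ) j l (tτ ((k : ℕ) + 1) l))) *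
        (deriv (fΓ l) (∑ j ∈ Finset.univ.filter (fun j : Fin n => (j : ℕ) < (k : ℕ)),
            tΓ (k : ℕ) j l (tτ ((k : ℕ) + 1) l)) /
          fΓ l (∑ j ∈ Finset.univ.filter (fun j : Fin n => (j : ℕ) < (k : ℕ)),
            tΓ (k : ℕ) j l (tτ ((k : ℕ) + 1) l))))
    (htΓ : ∀ (k : Fin n) (i : Fin n) (l : Fin m) (t : ℝ),
      tΓ ((k : ℕ) + 1) i l t =
        if (i : ℕ) ≤ (k : ℕ) then
          (if t < tτ ((k : ℕ) + 1) l then tΓ (k : ℕ) i l t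
          else s i l - (s i l - tΓ (k : ℕ) i l (tτ ((k : ℕ) + 1) l)) *
            (ft l t / ft l (tτ ((k : ℕ) + 1) l)) ^
              ((1 - α l * θmin) / (α l * θmin * tΛ ((k : ℕ) + 1) l)))
        else 0)
    -- asset `k₀` has an exponential inverse demand function with impact `b ≥ 0`
    (k₀ : Fin m) (b : ℝ)
    (hexp : ∀ γ, fΓ k₀ γ = Real.exp (-(b * γ))) :
    ∀ i : Fin n, tΛ ((i : ℕ) + 1) k₀ =
      1 - b * ((1 - α k₀ * θmin) / (α k₀ * θmin)) *
        ∑ j ∈ Finset.univ.filter (fun j : Fin n => j ≤ i),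
          s j k₀ * ∏ h ∈ Finset.Icc ((j : ℕ) + 1) (i : ℕ),
            (ft k₀ (tτ (h + 1) k₀) / ft k₀ (tτ h k₀)) ^
              ((1 - α k₀ * θmin) / (α k₀ * θmin * tΛ h k₀)) := by
  intro i
  have hlog : ∀ γ, deriv (fΓ k₀) γ / fΓ k₀ γ = -b := fun γ => by
    rw [← logDeriv_apply, funext hexp, logDeriv_exp_neg_mul]
  have hremaining := sub_liquidated_eq_mul_prod (fun j => s j k₀) (ft k₀) (fun h => tτ h k₀)
    (fun h => (1 - α k₀ * θmin) / (α k₀ * θmin * tΛ h k₀)) (fun h j t => tΓ h j k₀ t)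
    (fun j t => htΓ0 j k₀ t) (htτmono k₀) (fun k j t => htΓ k j k₀ t) i i.2
  rw [htΛ i k₀, hlog, Finset.sum_congr rfl fun j hj => hremaining j (by simpa using hj)]
  simp only [Fin.le_def]
  ring

/-- **Corollary 4.2 (exponential inverse demand: closed form for `Λ̃`).**
If the inverse demand function of asset `k` is exponential,
`f_{Γ,k}(γ) = exp(-bₖ γ)` with `bₖ ≥ 0`, then the coefficients of the stress-test
recursion satisfy, for every bank `i`,
`Λ̃_{ik} = 1 - bₖ ((1-αₖθmin)/(αₖθmin)) Σ_{j=1}^{i} s_{jk} Π_{h=j}^{i-1}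
(f_{t,k}(τ̃_{h+1,k})/f_{t,k}(τ̃_{hk}))^{(1-αₖθmin)/(αₖθmin Λ̃_{hk})}`.
(Bank `i : Fin n` corresponds to bank `i+1` of the paper.) -/
theorem stress_test_Lambda_exponential
    (n m : ℕ) (hn : 0 < n) (hm : 0 < m)
    (T θmin : ℝ) (hT : 0 ≤ T) (hθmin : 0 < θmin)
    (x ℓ pbar αl : Fin n → ℝ) (s : Fin n → Fin m → ℝ) (α : Fin m → ℝ)
    (hs : ∀ i k, 0 ≤ s i k)
    (hα : ∀ k, 0 < α k) (hαθ : ∀ k, α k * θmin < 1)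
    (ft fΓ : Fin m → ℝ → ℝ)
    (hftC : ∀ k, ContDiff ℝ 1 (ft k)) (hftanti : ∀ k, AntitoneOn (ft k) (Ici 0))
    (hftmem : ∀ k, ∀ t ∈ Ici (0 : ℝ), ft k t ∈ Ioc (0 : ℝ) 1) (hft0 : ∀ k, ft k 0 = 1)
    (hfΓC : ∀ k, ContDiff ℝ 2 (fΓ k)) (hfΓanti : ∀ k, Antitone (fΓ k))
    (hfΓpos : ∀ k γ, 0 < fΓ k γ) (hfΓ0 : ∀ k, fΓ k 0 = 1)
    -- the individual price thresholds `q̄ᵢ`, ordered nonincreasingly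
    (qbar : Fin n → ℝ)
    (hqbar : ∀ i, qbar i =
      (pbar i - x i - (1 - αl i * θmin) * ℓ i) / (∑ k, (1 - α k * θmin) * s i k))
    (horder : ∀ i j : Fin n, i ≤ j → qbar j ≤ qbar i)
    -- the stress-test recursion
    (tτ tΛ : ℕ → Fin m → ℝ) (tΓ : ℕ → Fin n → Fin m → ℝ → ℝ)
    (htΓ0 : ∀ i l t, tΓ 0 i l t = 0)
    (htτ0 : ∀ l, tτ 0 l = 0) (htτtop : ∀ l, tτ (n + 1) l = T)
    (htτmono : ∀ l, Monotone fun k => tτ k l)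
    (htτmem : ∀ l, ∀ k ≤ n + 1, tτ k l ∈ Icc 0 T)
    (htτ : ∀ (k : Fin n) (l : Fin m), tτ ((k : ℕ) + 1) l =
      sInf {t | t ∈ Icc (tτ (k : ℕ) l) T ∧
        ft l t * fΓ l (∑ j ∈ Finset.univ.filter (fun j : Fin n => (j : ℕ) < (k : ℕ)),
          tΓ (k : ℕ) j l t) ≤ qbar k})
    (htΛ : ∀ (k : Fin n) (l : Fin m), tΛ ((k : ℕ) + 1) l =
      1 + (1 - α l * θmin) / (α l * θmin) *
        (∑ j ∈ Finset.univ.filter (fun j : Fin n => (j : ℕ) ≤ (k : ℕ)),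
          (s j l - tΓ (k : ℕ) j l (tτ ((k : ℕ) + 1) l))) *
        (deriv (fΓ l) (∑ j ∈ Finset.univ.filter (fun j : Fin n => (j : ℕ) < (k : ℕ)),
            tΓ (k : ℕ) j l (tτ ((k : ℕ) + 1) l)) /
          fΓ l (∑ j ∈ Finset.univ.filter (fun j : Fin n => (j : ℕ) < (k : ℕ)),
            tΓ (k : ℕ) j l (tτ ((k : ℕ) + 1) l))))
    (htΓ : ∀ (k : Fin n) (i : Fin n) (l : Fin m) (t : ℝ),
      tΓ ((k : ℕ) + 1) i l t =
        if (i : ℕ) ≤ (k : ℕ) then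
          (if t < tτ ((k : ℕ) + 1) l then tΓ (k : ℕ) i l t
          else s i l - (s i l - tΓ (k : ℕ) i l (tτ ((k : ℕ) + 1) l)) *
            (ft l t / ft l (tτ ((k : ℕ) + 1) l)) ^
              ((1 - α l * θmin) / (α l * θmin * tΛ ((k : ℕ) + 1) l)))
        else 0)
    -- asset `k₀` has an exponential inverse demand function with impact `b ≥ 0`
    (k₀ : Fin m) (b : ℝ) (hb : 0 ≤ b)
    (hexp : ∀ γ, fΓ k₀ γ = Real.exp (-(b * γ))) :
    ∀ i : Fin n, tΛ ((i : ℕ) + 1) k₀ =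
      1 - b * ((1 - α k₀ * θmin) / (α k₀ * θmin)) *
        ∑ j ∈ Finset.univ.filter (fun j : Fin n => j ≤ i),
          s j k₀ * ∏ h ∈ Finset.Icc ((j : ℕ) + 1) (i : ℕ),
            (ft k₀ (tτ (h + 1) k₀) / ft k₀ (tτ h k₀)) ^
              ((1 - α k₀ * θmin) / (α k₀ * θmin * tΛ h k₀)) :=
  stress_test_Lambda_exponential_general n m θmin s α ft fΓ tτ tΛ tΓ htΓ0 htτmono htΛ htΓ k₀ b hexp
end

section
/- Suppose the map Γ ↦ (s − Γ) f_Γ′(Γ)/f_Γ(Γ) is nondecreasing on [0, s) and α ∈ ( −s f_Γ′(0)/((1 − s f_Γ′(0)) θ_min), 1/θ_min ). Then along any solution Γ : [τ, T] → [0, s) of the liquidation ODE with Γ(τ) = 0, the quantity Λ(t) := 1 + ((1 − α θ_min)/(α θ_min)) (s − Γ(t)) f_Γ′(Γ(t))/f_Γ(Γ(t)) is nondecreasing in t; in particular Λ(t) ≥ Λ(τ) = 1 + ((1 − α θ_min)/(α θ_min)) s f_Γ′(0) > 0 for all t ∈ [τ, T]. -/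
/-!
Along a solution the denominator of the liquidation ODE is exactly `Λ(t) = h(Γ(t))`, where
`h γ = 1 + ((1 - αθmin)/(αθmin)) (s - γ) fΓ'(γ)/fΓ(γ)` is nondecreasing on `[0, s)`. Since `Γ`
never drops below its initial value `Γ(τ) = 0`, this gives `Λ(t) ≥ h(0) = Λ(τ)` at once, and the
bound on `α` makes `h(0) > 0`. So the ODE has a nonnegative numerator over a positive denominator:
`Γ` is nondecreasing, hence so is `Λ = h ∘ Γ`.
-/

open Set

theorem AntitoneOn.deriv_nonpos_of_Ici {f : ℝ → ℝ} {a x : ℝ} (hf : AntitoneOn f (Ici a))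
    (hx : a ≤ x) : deriv f x ≤ 0 := by
  by_cases hd : DifferentiableAt ℝ f x
  · rw [← hd.derivWithin (uniqueDiffWithinAt_Ici x)]
    exact (hf.mono (Ici_subset_Ici.mpr hx)).derivWithin_nonpos
  · rw [deriv_zero_of_not_differentiableAt hd]

theorem monotoneOn_comp_of_hasDerivAt_eq_div {h Γ Γ' N : ℝ → ℝ} {S D : Set ℝ} {a : ℝ}
    (hD : Convex ℝ D) (hh : MonotoneOn h S) (hmaps : MapsTo Γ D S) (ha : Γ a ∈ S)
    (hmin : ∀ t ∈ D, Γ a ≤ Γ t) (hpos : 0 < h (Γ a))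
    (hΓ : ∀ t ∈ D, HasDerivAt Γ (Γ' t) t) (hN : ∀ t ∈ D, 0 ≤ N t)
    (hode : ∀ t ∈ D, Γ' t = N t / h (Γ t)) :
    MonotoneOn (h ∘ Γ) D := by
  have hΓ'_nonneg : ∀ t ∈ D, 0 ≤ Γ' t := fun t ht => by
    rw [hode t ht]
    exact div_nonneg (hN t ht) (hpos.trans_le (hh ha (hmaps ht) (hmin t ht))).le
  have hΓmono : MonotoneOn Γ D :=
    monotoneOn_of_hasDerivWithinAt_nonneg hD (HasDerivAt.continuousOn hΓ)
      (fun t ht => (hΓ t (interior_subset ht)).hasDerivWithinAt)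
      (fun t ht => hΓ'_nonneg t (interior_subset ht))
  exact hh.comp hΓmono hmaps

theorem one_add_mul_pos_of_div_lt {x α θ : ℝ} (hx : x ≤ 0) (hθ : 0 < θ)
    (hα : -x / ((1 - x) * θ) < α) :
    0 < 1 + (1 - α * θ) / (α * θ) * x := by
  have hlow : -x < α * ((1 - x) * θ) := (div_lt_iff₀ (mul_pos (by linarith) hθ)).mp hα
  have hαθ : 0 < α * θ := by nlinarith
  have hnum : 0 < α * θ + (1 - α * θ) * x := by linarith
  calc (0 : ℝ) < (α * θ + (1 - α * θ) * x) / (α * θ) := div_pos hnum hαθ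
    _ = 1 + (1 - α * θ) / (α * θ) * x := by
      rw [div_mul_eq_mul_div, one_add_div hαθ.ne']

theorem one_add_div_mul_mul_eq {a b s γ f g d : ℝ} (hf : f ≠ 0) :
    1 + a * (s - γ) / (b * f * g) * f * d = 1 + a / b * ((s - γ) * d / g) := by
  rw [mul_right_comm b f g, ← div_div, div_mul_cancel₀ _ hf]
  ring

theorem Lambda_monotone_along_solution_general
    (s α θmin τ T : ℝ)
    (hs : 0 < s)
    (hθmin : 0 < θmin) (hα : 0 < α) (hαθ : α * θmin < 1)
    (hτ : 0 ≤ τ)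
    (ft fΓ : ℝ → ℝ)
    (hftanti : AntitoneOn ft (Ici 0))
    (hftmem : ∀ t ∈ Ici (0 : ℝ), ft t ∈ Ioc (0 : ℝ) 1)
    (hfΓanti : Antitone fΓ)
    (hfΓpos : ∀ γ, 0 < fΓ γ) (hfΓ0 : fΓ 0 = 1)
    -- key assumption on the inverse demand function
    (hmono : MonotoneOn (fun γ => (s - γ) * deriv fΓ γ / fΓ γ) (Ico 0 s))
    -- key assumption on the risk-weight
    (hαmem : α ∈ Ioo (-(s * deriv fΓ 0) / ((1 - s * deriv fΓ 0) * θmin)) (1 / θmin))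
    -- the map `Z` (the bank is at the regulatory threshold on `[τ, T]`)
    (Z : ℝ → ℝ → ℝ)
    (hZ : ∀ t γ, Z t γ = ((1 - α * θmin) * (s - γ)) / (α * θmin * ft t * fΓ γ))
    -- a solution `Γ : [τ,T] → [0,s)` of the liquidation ODE with `Γ(τ) = 0`
    (Γ Γ' : ℝ → ℝ)
    (hΓτ : Γ τ = 0)
    (hrange : ∀ t ∈ Icc τ T, Γ t ∈ Ico 0 s)
    (hderiv : ∀ t ∈ Icc τ T, HasDerivAt Γ (Γ' t) t)
    (hODE : ∀ t ∈ Icc τ T, Γ' t =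
      -(Z t (Γ t) * deriv ft t * fΓ (Γ t)) /
        (1 + Z t (Γ t) * ft t * deriv fΓ (Γ t)))
    -- the quantity `Λ`
    (Λ : ℝ → ℝ)
    (hΛ : ∀ t, Λ t = 1 + (1 - α * θmin) / (α * θmin) *
      ((s - Γ t) * deriv fΓ (Γ t) / fΓ (Γ t))) :
    MonotoneOn Λ (Icc τ T) ∧
    Λ τ = 1 + (1 - α * θmin) / (α * θmin) * (s * deriv fΓ 0) ∧
    0 < Λ τ ∧
    ∀ t ∈ Icc τ T, Λ τ ≤ Λ t := by
  have hc : 0 ≤ (1 - α * θmin) / (α * θmin) := div_nonneg (by linarith) (mul_pos hα hθmin).le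
  set h : ℝ → ℝ := fun γ => 1 + (1 - α * θmin) / (α * θmin) * ((s - γ) * deriv fΓ γ / fΓ γ)
  have hΛh : Λ = h ∘ Γ := funext hΛ
  have hh : MonotoneOn h (Ico 0 s) := fun x hx y hy hxy =>
    (add_le_add_iff_left 1).mpr (mul_le_mul_of_nonneg_left (hmono hx hy hxy) hc)
  have hΓτ_mem : Γ τ ∈ Ico 0 s := ⟨hΓτ.ge, hΓτ ▸ hs⟩
  have hΛτ : Λ τ = 1 + (1 - α * θmin) / (α * θmin) * (s * deriv fΓ 0) := by
    rw [hΛ, hΓτ, hfΓ0, sub_zero, div_one]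
  have hΛτ_pos : 0 < Λ τ :=
    hΛτ ▸ one_add_mul_pos_of_div_lt
      (mul_nonpos_of_nonneg_of_nonpos hs.le hfΓanti.deriv_nonpos) hθmin hαmem.1
  have hΛτ_le : ∀ t ∈ Icc τ T, Λ τ ≤ Λ t := fun t ht => by
    rw [hΛh]
    exact hh hΓτ_mem (hrange t ht) (hΓτ ▸ (hrange t ht).1)
  have hft : ∀ t ∈ Icc τ T, 0 < ft t := fun t ht => (hftmem t (hτ.trans ht.1)).1
  have hZ_nonneg : ∀ t ∈ Icc τ T, 0 ≤ Z t (Γ t) := fun t ht => by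
    have := hft t ht
    have := hfΓpos (Γ t)
    have := (hrange t ht).2
    rw [hZ]
    exact div_nonneg (mul_nonneg (by linarith) (by linarith)) (by positivity)
  have hnum : ∀ t ∈ Icc τ T, 0 ≤ -(Z t (Γ t) * deriv ft t * fΓ (Γ t)) := fun t ht =>
    neg_nonneg.mpr (mul_nonpos_of_nonpos_of_nonneg (mul_nonpos_of_nonneg_of_nonpos
      (hZ_nonneg t ht) (hftanti.deriv_nonpos_of_Ici (hτ.trans ht.1))) (hfΓpos _).le)
  have hden : ∀ t ∈ Icc τ T, 1 + Z t (Γ t) * ft t * deriv fΓ (Γ t) = h (Γ t) := fun t ht => by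
    rw [hZ]
    exact one_add_div_mul_mul_eq (hft t ht).ne'
  have hΛmono : MonotoneOn Λ (Icc τ T) := hΛh ▸
    monotoneOn_comp_of_hasDerivAt_eq_div (convex_Icc τ T) hh hrange hΓτ_mem
      (fun t ht => hΓτ ▸ (hrange t ht).1) (hΛτ_pos.trans_eq (hΛ τ)) hderiv hnum
      (fun t ht => (hODE t ht).trans (by rw [hden t ht]))
  exact ⟨hΛmono, hΛτ, hΛτ_pos, hΛτ_le⟩

/-- **Monotonicity of `Λ` along the solution (proof of Lemma 3.1 / Theorem 3.4).**
Along any solution `Γ : [τ,T] → [0,s)` of the liquidation ODE with `Γ(τ) = 0`, the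
quantity `Λ(t) = 1 + ((1 - αθmin)/(αθmin)) (s - Γ(t)) fΓ'(Γ(t))/fΓ(Γ(t))` is
nondecreasing; in particular `Λ(t) ≥ Λ(τ) = 1 + ((1 - αθmin)/(αθmin)) s fΓ'(0) > 0`
for all `t ∈ [τ, T]`. -/
theorem Lambda_monotone_along_solution
    (s α θmin τ T : ℝ)
    (hs : 0 < s)
    (hθmin : 0 < θmin) (hα : 0 < α) (hαθ : α * θmin < 1)
    (hτ : 0 ≤ τ) (hτT : τ ≤ T)
    (ft fΓ : ℝ → ℝ)
    (hftC : ContDiff ℝ 1 ft) (hftanti : AntitoneOn ft (Ici 0))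
    (hftmem : ∀ t ∈ Ici (0 : ℝ), ft t ∈ Ioc (0 : ℝ) 1) (hft0 : ft 0 = 1)
    (hfΓC : ContDiff ℝ 2 fΓ) (hfΓanti : Antitone fΓ)
    (hfΓpos : ∀ γ, 0 < fΓ γ) (hfΓ0 : fΓ 0 = 1)
    -- key assumption on the inverse demand function
    (hmono : MonotoneOn (fun γ => (s - γ) * deriv fΓ γ / fΓ γ) (Ico 0 s))
    -- key assumption on the risk-weight
    (hαmem : α ∈ Ioo (-(s * deriv fΓ 0) / ((1 - s * deriv fΓ 0) * θmin)) (1 / θmin))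
    -- the map `Z` (the bank is at the regulatory threshold on `[τ, T]`)
    (Z : ℝ → ℝ → ℝ)
    (hZ : ∀ t γ, Z t γ = ((1 - α * θmin) * (s - γ)) / (α * θmin * ft t * fΓ γ))
    -- a solution `Γ : [τ,T] → [0,s)` of the liquidation ODE with `Γ(τ) = 0`
    (Γ Γ' : ℝ → ℝ)
    (hΓτ : Γ τ = 0)
    (hrange : ∀ t ∈ Icc τ T, Γ t ∈ Ico 0 s)
    (hderiv : ∀ t ∈ Icc τ T, HasDerivAt Γ (Γ' t) t)
    (hODE : ∀ t ∈ Icc τ T, Γ' t =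
      -(Z t (Γ t) * deriv ft t * fΓ (Γ t)) /
        (1 + Z t (Γ t) * ft t * deriv fΓ (Γ t)))
    -- the quantity `Λ`
    (Λ : ℝ → ℝ)
    (hΛ : ∀ t, Λ t = 1 + (1 - α * θmin) / (α * θmin) *
      ((s - Γ t) * deriv fΓ (Γ t) / fΓ (Γ t))) :
    MonotoneOn Λ (Icc τ T) ∧
    Λ τ = 1 + (1 - α * θmin) / (α * θmin) * (s * deriv fΓ 0) ∧
    0 < Λ τ ∧
    ∀ t ∈ Icc τ T, Λ τ ≤ Λ t :=
  Lambda_monotone_along_solution_general s α θmin τ T hs hθmin hα hαθ hτ ft fΓ hftanti hftmem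
    hfΓanti hfΓpos hfΓ0 hmono hαmem Z hZ Γ Γ' hΓτ hrange hderiv hODE Λ hΛ
end

section
/- Suppose the map Γ ↦ (s − Γ) f_Γ′(Γ)/f_Γ(Γ) is nondecreasing on [0, s) and α ∈ ( −s f_Γ′(0)/((1 − s f_Γ′(0)) θ_min), 1/θ_min ). Let Γ be a solution of the liquidation ODE on [τ, T*] with Γ(τ) = 0 and Γ(u) ∈ [0, s) for u ∈ [τ, T*). Then for every u ∈ [τ, T*), Γ(u) ≤ s [ 1 − exp( ((1 − α θ_min) · inf_{t ∈ [τ, T*]} f_t′(t)) / (α θ_min f_t(T*) Λ(τ)) · (u − τ) ) ] < s, where Λ(τ) = 1 + ((1 − α θ_min)/(α θ_min)) s f_Γ′(0); in particular, by continuity, Γ(T*) < s. -/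
open Set

noncomputable section

/-! At the capital-ratio threshold the liquidation speed is
`Γ' = K (s - Γ) (-f_t') / (f_t (1 + K R(Γ)))` with `K = (1 - αθ_min)/(αθ_min)` and
`R(γ) = (s - γ) f_Γ'(γ) / f_Γ(γ)`. Monotonicity of `R` gives `1 + K R(Γ) ≥ 1 + K R(0) = Λ(τ)`,
which the lower bound on `α` makes positive; with `f_t ≥ f_t(T*)` and `f_t' ≥ inf f_t'`, the
remaining stock `s - Γ` satisfies the linear inequality `(s - Γ)' ≥ c (s - Γ)`, and comparison
with `s e^{c (u - τ)}` gives the bound. -/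

theorem HasDerivAt.nonpos_of_antitoneOn_Ici {f : ℝ → ℝ} {a t d : ℝ}
    (hf : AntitoneOn f (Ici a)) (ht : a ≤ t) (hd : HasDerivAt f d t) : d ≤ 0 := by
  rw [← hd.hasDerivWithinAt.derivWithin (uniqueDiffOn_Ici a t ht)]
  exact hf.derivWithin_nonpos

theorem mul_exp_le_of_mul_le_deriv {y y' : ℝ → ℝ} {a b c : ℝ}
    (hy : ContinuousOn y (Icc a b)) (hy' : ∀ t ∈ Ioo a b, HasDerivAt y (y' t) t)
    (hle : ∀ t ∈ Ioo a b, c * y t ≤ y' t) :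
    ∀ u ∈ Icc a b, y a * Real.exp (c * (u - a)) ≤ y u := by
  set g : ℝ → ℝ := fun u => y u * Real.exp (-c * (u - a))
  have hg' : ∀ t ∈ Ioo a b, HasDerivAt g
      (y' t * Real.exp (-c * (t - a)) + y t * (Real.exp (-c * (t - a)) * -c)) t := by
    intro t ht
    have hlin : HasDerivAt (fun u : ℝ => -c * (u - a)) (-c) t := by
      simpa using ((hasDerivAt_id t).sub_const a).const_mul (-c)
    exact (hy' t ht).mul hlin.exp
  have hg : MonotoneOn g (Icc a b) := by
    refine monotoneOn_of_deriv_nonneg (convex_Icc a b)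
      (hy.mul (by fun_prop)) (fun t ht => ?_) (fun t ht => ?_) <;> rw [interior_Icc] at ht
    · exact (hg' t ht).differentiableAt.differentiableWithinAt
    · rw [(hg' t ht).deriv]
      nlinarith [hle t ht, Real.exp_pos (-c * (t - a))]
  intro u hu
  have hgu : y a ≤ y u * Real.exp (-c * (u - a)) := by
    simpa [g] using hg (left_mem_Icc.2 (hu.1.trans hu.2)) hu hu.1
  calc y a * Real.exp (c * (u - a))
      ≤ y u * Real.exp (-c * (u - a)) * Real.exp (c * (u - a)) := by gcongr
    _ = y u := by rw [mul_assoc, ← Real.exp_add, neg_mul, neg_add_cancel, Real.exp_zero, mul_one]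

theorem liquidation_lambda_pos {α θ d : ℝ} (hθ : 0 < θ) (hα : 0 < α) (hd : d ≤ 0)
    (hαd : -d / ((1 - d) * θ) < α) : 0 < 1 + (1 - α * θ) / (α * θ) * d := by
  have hαθ : 0 < α * θ := mul_pos hα hθ
  have hden : 0 < (1 - d) * θ := mul_pos (by linarith) hθ
  have hnum : 0 < α * θ + (1 - α * θ) * d := by
    nlinarith [(div_lt_iff₀ hden).1 hαd]
  calc (0 : ℝ) < (α * θ + (1 - α * θ) * d) / (α * θ) := div_pos hnum hαθ
    _ = 1 + (1 - α * θ) / (α * θ) * d := by field_simp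

-- `a = αθ_min`, `w = s - γ`, `x = f_t(t)`, `y = f_Γ(γ)`, `p = f_t'(t)`, `q = f_Γ'(γ)`.
theorem liquidation_speed_eq (a w x y p q : ℝ) (ha : a ≠ 0) (hx : x ≠ 0) (hy : y ≠ 0) :
    -(-((1 - a) * w / (a * x * y) * p * y) / (1 + (1 - a) * w / (a * x * y) * x * q)) =
      (1 - a) / a * w * p / (x * (1 + (1 - a) / a * (w * q / y))) := by
  have hnum : (1 - a) * w / (a * x * y) * p * y = (1 - a) / a * w * p / x := by
    field_simp
  have hden : 1 + (1 - a) * w / (a * x * y) * x * q = 1 + (1 - a) / a * (w * q / y) := by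
    field_simp
  rw [hnum, hden, neg_div, neg_neg, div_div, mul_comm x]

theorem mul_sub_le_neg_liquidation_speed {a s γ x x₀ y p q q₀ m : ℝ} (ha : 0 < a) (ha1 : a < 1)
    (hγ : γ ≤ s) (hx₀ : 0 < x₀) (hx : x₀ ≤ x) (hy : 0 < y) (hmp : m ≤ p) (hp : p ≤ 0)
    (hΛ : 0 < 1 + (1 - a) / a * (s * q₀)) (hR : s * q₀ ≤ (s - γ) * q / y) :
    (1 - a) * m / (a * x₀ * (1 + (1 - a) / a * (s * q₀))) * (s - γ) ≤
      -(-((1 - a) * (s - γ) / (a * x * y) * p * y) /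
        (1 + (1 - a) * (s - γ) / (a * x * y) * x * q)) := by
  have hK : 0 ≤ (1 - a) / a := div_nonneg (by linarith) ha.le
  have hKw : 0 ≤ (1 - a) / a * (s - γ) := mul_nonneg hK (by linarith)
  have hΛR : 1 + (1 - a) / a * (s * q₀) ≤ 1 + (1 - a) / a * ((s - γ) * q / y) := by gcongr
  rw [liquidation_speed_eq a _ x y p q ha.ne' (hx₀.trans_le hx).ne' hy.ne']
  calc (1 - a) * m / (a * x₀ * (1 + (1 - a) / a * (s * q₀))) * (s - γ)
      = (1 - a) / a * (s - γ) * m / (x₀ * (1 + (1 - a) / a * (s * q₀))) := by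
        field_simp
    _ ≤ (1 - a) / a * (s - γ) * p / (x₀ * (1 + (1 - a) / a * (s * q₀))) := by
        gcongr
    _ ≤ (1 - a) / a * (s - γ) * p / (x * (1 + (1 - a) / a * ((s - γ) * q / y))) := by
        have := div_le_div_of_nonneg_left (neg_nonneg.2 (mul_nonpos_of_nonneg_of_nonpos hKw hp))
          (by positivity) (mul_le_mul hx hΛR hΛ.le (hx₀.trans_le hx).le)
        simpa only [neg_div, neg_le_neg_iff] using this

theorem liquidation_exponential_bound_general
    (s α θmin τ Tstar : ℝ)
    (hs : 0 < s)
    (hθmin : 0 < θmin) (hα : 0 < α) (hαθ : α * θmin < 1)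
    (hτ : 0 ≤ τ) (hτT : τ ≤ Tstar)
    (ft fΓ : ℝ → ℝ)
    (hftC : ContDiff ℝ 1 ft) (hftanti : AntitoneOn ft (Ici 0))
    (hftmem : ∀ t ∈ Ici (0 : ℝ), ft t ∈ Ioc (0 : ℝ) 1)
    (hfΓanti : Antitone fΓ)
    (hfΓpos : ∀ γ, 0 < fΓ γ) (hfΓ0 : fΓ 0 = 1)
    -- key assumption on the inverse demand function
    (hmono : MonotoneOn (fun γ => (s - γ) * deriv fΓ γ / fΓ γ) (Ico 0 s))
    -- key assumption on the risk-weight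
    (hαmem : α ∈ Ioo (-(s * deriv fΓ 0) / ((1 - s * deriv fΓ 0) * θmin)) (1 / θmin))
    -- the map `Z` (the bank is at the regulatory threshold on `[τ, T*]`)
    (Z : ℝ → ℝ → ℝ)
    (hZ : ∀ t γ, Z t γ = ((1 - α * θmin) * (s - γ)) / (α * θmin * ft t * fΓ γ))
    -- a solution of the liquidation ODE on `[τ, T*]` with `Γ(τ) = 0`,
    -- staying in `[0, s)` on `[τ, T*)`
    (Γ Γ' : ℝ → ℝ)
    (hΓτ : Γ τ = 0)
    (hrange : ∀ u ∈ Ico τ Tstar, Γ u ∈ Ico 0 s)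
    (hderiv : ∀ t ∈ Icc τ Tstar, HasDerivAt Γ (Γ' t) t)
    (hODE : ∀ t ∈ Icc τ Tstar, Γ' t =
      -(Z t (Γ t) * deriv ft t * fΓ (Γ t)) /
        (1 + Z t (Γ t) * ft t * deriv fΓ (Γ t))) :
    (∀ u ∈ Ico τ Tstar,
      Γ u ≤ s * (1 - Real.exp
        ((1 - α * θmin) * sInf (deriv ft '' Icc τ Tstar) /
          (α * θmin * ft Tstar *
            (1 + (1 - α * θmin) / (α * θmin) * (s * deriv fΓ 0))) * (u - τ))) ∧
      s * (1 - Real.exp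
        ((1 - α * θmin) * sInf (deriv ft '' Icc τ Tstar) /
          (α * θmin * ft Tstar *
            (1 + (1 - α * θmin) / (α * θmin) * (s * deriv fΓ 0))) * (u - τ))) < s) ∧
    Γ Tstar < s := by
  have hΛ : 0 < 1 + (1 - α * θmin) / (α * θmin) * (s * deriv fΓ 0) :=
    liquidation_lambda_pos hθmin hα (mul_nonpos_of_nonneg_of_nonpos hs.le hfΓanti.deriv_nonpos)
      hαmem.1
  have hbdd : BddBelow (deriv ft '' Icc τ Tstar) :=
    (isCompact_Icc.image (hftC.continuous_deriv le_rfl)).bddBelow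
  set c := (1 - α * θmin) * sInf (deriv ft '' Icc τ Tstar) /
    (α * θmin * ft Tstar * (1 + (1 - α * θmin) / (α * θmin) * (s * deriv fΓ 0)))
  have hspeed : ∀ t ∈ Ioo τ Tstar, c * (s - Γ t) ≤ -Γ' t := by
    intro t ht
    have ht' : t ∈ Icc τ Tstar := Ioo_subset_Icc_self ht
    obtain ⟨hγ0, hγs⟩ := hrange t (Ioo_subset_Ico_self ht)
    rw [hODE t ht', hZ]
    refine mul_sub_le_neg_liquidation_speed (mul_pos hα hθmin) hαθ hγs.le
      (hftmem _ (hτ.trans hτT)).1 (hftanti (hτ.trans ht'.1) (hτ.trans hτT) ht'.2) (hfΓpos _)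
      (csInf_le hbdd (mem_image_of_mem _ ht'))
      ((hftC.differentiable one_ne_zero t).hasDerivAt.nonpos_of_antitoneOn_Ici hftanti
        (hτ.trans ht'.1)) hΛ ?_
    simpa [hfΓ0] using hmono ⟨le_rfl, hs⟩ ⟨hγ0, hγs⟩ hγ0
  have hgap : ∀ u ∈ Icc τ Tstar, s * Real.exp (c * (u - τ)) ≤ s - Γ u := by
    simpa [hΓτ] using mul_exp_le_of_mul_le_deriv (y := fun u => s - Γ u)
      (fun u hu => ((hderiv u hu).const_sub s).continuousAt.continuousWithinAt)
      (fun t ht => (hderiv t (Ioo_subset_Icc_self ht)).const_sub s) hspeed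
  refine ⟨fun u hu => ⟨?_, ?_⟩, ?_⟩
  · linarith [hgap u (Ico_subset_Icc_self hu), mul_one_sub s (Real.exp (c * (u - τ)))]
  · linarith [mul_pos hs (Real.exp_pos (c * (u - τ))), mul_one_sub s (Real.exp (c * (u - τ)))]
  · linarith [hgap Tstar (right_mem_Icc.2 hτT), mul_pos hs (Real.exp_pos (c * (Tstar - τ)))]

/-- **Exponential bound on the liquidations (proof of Lemma 3.1).**
If `Γ` solves the liquidation ODE on `[τ, T*]` with `Γ(τ) = 0` and
`Γ(u) ∈ [0, s)` for `u ∈ [τ, T*)`, then for every `u ∈ [τ, T*)`,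
`Γ(u) ≤ s (1 - exp(((1 - αθmin) inf_{t∈[τ,T*]} ft'(t))/(αθmin ft(T*) Λ(τ)) (u - τ))) < s`,
where `Λ(τ) = 1 + ((1 - αθmin)/(αθmin)) s fΓ'(0)`; in particular, by continuity,
`Γ(T*) < s`. -/
theorem liquidation_exponential_bound
    (s α θmin τ Tstar : ℝ)
    (hs : 0 < s)
    (hθmin : 0 < θmin) (hα : 0 < α) (hαθ : α * θmin < 1)
    (hτ : 0 ≤ τ) (hτT : τ ≤ Tstar)
    (ft fΓ : ℝ → ℝ)
    (hftC : ContDiff ℝ 1 ft) (hftanti : AntitoneOn ft (Ici 0))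
    (hftmem : ∀ t ∈ Ici (0 : ℝ), ft t ∈ Ioc (0 : ℝ) 1) (hft0 : ft 0 = 1)
    (hfΓC : ContDiff ℝ 2 fΓ) (hfΓanti : Antitone fΓ)
    (hfΓpos : ∀ γ, 0 < fΓ γ) (hfΓ0 : fΓ 0 = 1)
    -- key assumption on the inverse demand function
    (hmono : MonotoneOn (fun γ => (s - γ) * deriv fΓ γ / fΓ γ) (Ico 0 s))
    -- key assumption on the risk-weight
    (hαmem : α ∈ Ioo (-(s * deriv fΓ 0) / ((1 - s * deriv fΓ 0) * θmin)) (1 / θmin))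
    -- the map `Z` (the bank is at the regulatory threshold on `[τ, T*]`)
    (Z : ℝ → ℝ → ℝ)
    (hZ : ∀ t γ, Z t γ = ((1 - α * θmin) * (s - γ)) / (α * θmin * ft t * fΓ γ))
    -- a solution of the liquidation ODE on `[τ, T*]` with `Γ(τ) = 0`,
    -- staying in `[0, s)` on `[τ, T*)`
    (Γ Γ' : ℝ → ℝ)
    (hΓτ : Γ τ = 0)
    (hrange : ∀ u ∈ Ico τ Tstar, Γ u ∈ Ico 0 s)
    (hderiv : ∀ t ∈ Icc τ Tstar, HasDerivAt Γ (Γ' t) t)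
    (hODE : ∀ t ∈ Icc τ Tstar, Γ' t =
      -(Z t (Γ t) * deriv ft t * fΓ (Γ t)) /
        (1 + Z t (Γ t) * ft t * deriv fΓ (Γ t))) :
    (∀ u ∈ Ico τ Tstar,
      Γ u ≤ s * (1 - Real.exp
        ((1 - α * θmin) * sInf (deriv ft '' Icc τ Tstar) /
          (α * θmin * ft Tstar *
            (1 + (1 - α * θmin) / (α * θmin) * (s * deriv fΓ 0))) * (u - τ))) ∧
      s * (1 - Real.exp
        ((1 - α * θmin) * sInf (deriv ft '' Icc τ Tstar) /
          (α * θmin * ft Tstar *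
            (1 + (1 - α * θmin) / (α * θmin) * (s * deriv fΓ 0))) * (u - τ))) < s) ∧
    Γ Tstar < s :=
  liquidation_exponential_bound_general s α θmin τ Tstar hs hθmin hα hαθ hτ hτT ft fΓ hftC hftanti
    hftmem hfΓanti hfΓpos hfΓ0 hmono hαmem Z hZ Γ Γ' hΓτ hrange hderiv hODE
end
end

section
/- Let f : ℝ → (0,∞) be twice continuously differentiable and nonincreasing, let M > 0, and suppose the map Γ ↦ (M − Γ) f′(Γ)/f(Γ) is nondecreasing on [0, M). Then for every S ∈ (0, M], the map Γ ↦ (S − Γ) f′(Γ)/f(Γ) is also nondecreasing on [0, S). -/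
open Set

noncomputable section

lemma antitone_deriv_nonpos' {f : ℝ → ℝ} (hf : Antitone f) {x : ℝ}
    (hd : DifferentiableAt ℝ f x) : deriv f x ≤ 0 := by
  have h := hd.hasDerivAt
  rw [hasDerivAt_iff_tendsto_slope] at h
  have h2 : Filter.Tendsto (slope f x) (nhdsWithin x (Ioi x)) (nhds (deriv f x)) :=
    h.mono_left (nhdsWithin_mono x (fun y hy => ne_of_gt hy))
  refine le_of_tendsto h2 ?_
  filter_upwards [self_mem_nhdsWithin] with y hy
  have hxy : x < y := hy
  have : f y ≤ f x := hf hxy.le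
  rw [slope_def_field]
  exact div_nonpos_of_nonpos_of_nonneg (by linarith) (by linarith)

/-- **Inherited monotonicity (proof of Lemma 3.7).**
If `γ ↦ (M - γ) f'(γ)/f(γ)` is nondecreasing on `[0, M)` for a twice continuously
differentiable, positive, nonincreasing inverse demand function `f`, then for every
`S ∈ (0, M]` the map `γ ↦ (S - γ) f'(γ)/f(γ)` is nondecreasing on `[0, S)`. -/
theorem inherited_monotonicity
    (f : ℝ → ℝ) (M : ℝ) (hM : 0 < M)
    (hfC : ContDiff ℝ 2 f) (hfanti : Antitone f) (hfpos : ∀ γ, 0 < f γ)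
    (hmono : MonotoneOn (fun γ => (M - γ) * deriv f γ / f γ) (Ico 0 M)) :
    ∀ S ∈ Ioc 0 M,
      MonotoneOn (fun γ => (S - γ) * deriv f γ / f γ) (Ico 0 S) := by
  rintro S ⟨hS0, hSM⟩ x ⟨hx0, hxS⟩ y ⟨hy0, hyS⟩ hxy
  have hfd : Differentiable ℝ f := hfC.differentiable (by norm_num)
  have hdx : deriv f x ≤ 0 := antitone_deriv_nonpos' hfanti (hfd x)
  have hdy : deriv f y ≤ 0 := antitone_deriv_nonpos' hfanti (hfd y)
  have hfx := hfpos x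
  have hfy := hfpos y
  have hxM : x < M := lt_of_lt_of_le hxS hSM
  have hyM : y < M := lt_of_lt_of_le hyS hSM
  have hAB := hmono ⟨hx0, hxM⟩ ⟨hy0, hyM⟩ hxy
  simp only at hAB ⊢
  rw [div_le_div_iff₀ hfx hfy] at hAB ⊢
  -- let a = deriv f x * f y, b = deriv f y * f x
  set a := deriv f x * f y with ha
  set b := deriv f y * f x with hb
  have hAB' : (M - x) * a ≤ (M - y) * b := by rw [ha, hb]; linarith [hAB]
  have hanp : a ≤ 0 := mul_nonpos_of_nonpos_of_nonneg hdx hfy.le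
  have hbnp : b ≤ 0 := mul_nonpos_of_nonpos_of_nonneg hdy hfx.le
  have hMx : (0:ℝ) < M - x := by linarith
  have hMy : (0:ℝ) < M - y := by linarith
  have hSy : (0:ℝ) < S - y := by linarith
  have hc : (S - y) * (M - x) ≤ (S - x) * (M - y) := by nlinarith
  have key1 : (S - y) * (M - x) * ((M - x) * a) ≤ (S - y) * (M - x) * ((M - y) * b) :=
    mul_le_mul_of_nonneg_left hAB' (by positivity)
  have hMxa : (M - x) * a ≤ 0 := mul_nonpos_of_nonneg_of_nonpos hMx.le hanp
  have key2 : (S - x) * (M - y) * ((M - x) * a) ≤ (S - y) * (M - x) * ((M - x) * a) :=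
    mul_le_mul_of_nonpos_right hc hMxa
  have hgoal : (M - x) * (M - y) * ((S - x) * a) ≤ (M - x) * (M - y) * ((S - y) * b) := by
    nlinarith [key1, key2]
  have := le_of_mul_le_mul_left (by linarith [hgoal] : ((M-x)*(M-y)) * ((S - x) * a) ≤ ((M-x)*(M-y)) * ((S - y) * b)) (by positivity)
  rw [ha, hb] at this
  linarith [this]
end
end

section
/- Let f : ℝ → (0,∞) be twice continuously differentiable and nonincreasing with f(0) = 1, let M > 0, and suppose the map Γ ↦ (M − Γ) f′(Γ)/f(Γ) is nondecreasing on [0, M). Then for every S ∈ (0, M] and every Γ ∈ [0, S): 0 ≥ (S − Γ) f′(Γ)/f(Γ) ≥ M f′(0). Consequently, if θ_min > 0 and α ∈ ( −M f′(0)/((1 − M f′(0)) θ_min), 1/θ_min ), then 1 + ((1 − α θ_min)/(α θ_min)) (S − Γ) f′(Γ)/f(Γ) > 0. -/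
open Set

noncomputable section

/-!
Since `f` is antitone, `f' ≤ 0`, so the marginal impact term `(S - γ) f'(γ)/f(γ)` is nonpositive
and decreases when `S` grows to `M`; monotonicity of `γ ↦ (M - γ) f'(γ)/f(γ)` then bounds it
below by its value `M f'(0)` at `γ = 0`. Writing `t = α θmin ∈ (0, 1)`, the factor
`(1 - t)/t` is nonnegative, so `Λ ≥ 1 + (1 - t)/t · M f'(0)`, which is positive exactly when
`t > -M f'(0)/(1 - M f'(0))`.
-/

section MarginalImpact

variable {f : ℝ → ℝ} {M S γ : ℝ}

lemma sub_mul_deriv_div_nonpos (hf : Antitone f) (hfγ : 0 < f γ) (hγS : γ ≤ S) :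
    (S - γ) * deriv f γ / f γ ≤ 0 :=
  div_nonpos_of_nonpos_of_nonneg
    (mul_nonpos_of_nonneg_of_nonpos (sub_nonneg.2 hγS) hf.deriv_nonpos) hfγ.le

lemma mul_deriv_zero_le_sub_mul_deriv_div (hf : Antitone f) (hfpos : ∀ x, 0 < f x)
    (hf0 : f 0 = 1) (hmono : MonotoneOn (fun x => (M - x) * deriv f x / f x) (Ico 0 M))
    (hγ0 : 0 ≤ γ) (hγS : γ < S) (hSM : S ≤ M) :
    M * deriv f 0 ≤ (S - γ) * deriv f γ / f γ := by
  have hγM : γ < M := hγS.trans_le hSM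
  calc M * deriv f 0 = (M - 0) * deriv f 0 / f 0 := by rw [hf0, sub_zero, div_one]
    _ ≤ (M - γ) * deriv f γ / f γ := hmono ⟨le_rfl, hγ0.trans_lt hγM⟩ ⟨hγ0, hγM⟩ hγ0
    _ ≤ (S - γ) * deriv f γ / f γ := by
      gcongr ?_ / _
      · exact (hfpos γ).le
      · exact mul_le_mul_of_nonpos_right (by linarith) hf.deriv_nonpos

end MarginalImpact

lemma one_add_div_mul_pos {L t x : ℝ} (hL : L ≤ 0) (ht : t ∈ Ioo (-L / (1 - L)) 1)
    (hx : L ≤ x) : 0 < 1 + (1 - t) / t * x := by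
  obtain ⟨htL, ht1⟩ := ht
  have h1L : 0 < 1 - L := by linarith
  have ht0 : 0 < t := (div_nonneg (neg_nonneg.2 hL) h1L.le).trans_lt htL
  have hkey : 0 < t + (1 - t) * L := by
    have := (div_lt_iff₀ h1L).1 htL
    linarith
  calc 0 < (t + (1 - t) * L) / t := div_pos hkey ht0
    _ = 1 + (1 - t) / t * L := by field_simp
    _ ≤ 1 + (1 - t) / t * x := by gcongr

lemma mul_mem_Ioo_of_mem_Ioo_div {L θ α : ℝ} (hθ : 0 < θ)
    (hα : α ∈ Ioo (-L / ((1 - L) * θ)) (1 / θ)) : α * θ ∈ Ioo (-L / (1 - L)) 1 := by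
  obtain ⟨hαL, hα1⟩ := hα
  rw [div_mul_eq_div_div, div_lt_iff₀ hθ] at hαL
  rw [lt_div_iff₀ hθ] at hα1
  exact ⟨hαL, hα1⟩

theorem marginal_impact_bounds_general
    (f : ℝ → ℝ) (M : ℝ) (hM : 0 < M)
    (hfanti : Antitone f) (hfpos : ∀ γ, 0 < f γ)
    (hf0 : f 0 = 1)
    (hmono : MonotoneOn (fun γ => (M - γ) * deriv f γ / f γ) (Ico 0 M)) :
    ∀ S ∈ Ioc 0 M, ∀ γ ∈ Ico 0 S,
      ((S - γ) * deriv f γ / f γ ≤ 0 ∧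
        M * deriv f 0 ≤ (S - γ) * deriv f γ / f γ) ∧
      ∀ θmin α : ℝ, 0 < θmin →
        α ∈ Ioo (-(M * deriv f 0) / ((1 - M * deriv f 0) * θmin)) (1 / θmin) →
          0 < 1 + (1 - α * θmin) / (α * θmin) * ((S - γ) * deriv f γ / f γ) := by
  rintro S ⟨-, hSM⟩ γ ⟨hγ0, hγS⟩
  have hlower := mul_deriv_zero_le_sub_mul_deriv_div hfanti hfpos hf0 hmono hγ0 hγS hSM
  refine ⟨⟨sub_mul_deriv_div_nonpos hfanti (hfpos γ) hγS.le, hlower⟩, fun θmin α hθ hα => ?_⟩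
  exact one_add_div_mul_pos (mul_nonpos_of_nonneg_of_nonpos hM.le hfanti.deriv_nonpos)
    (mul_mem_Ioo_of_mem_Ioo_div hθ hα) hlower

/-- **Bounds on the marginal impact term and positivity of `Λ` (proof of Lemma 3.7).**
If `γ ↦ (M - γ) f'(γ)/f(γ)` is nondecreasing on `[0, M)`, then for every
`S ∈ (0, M]` and `γ ∈ [0, S)` one has `0 ≥ (S - γ) f'(γ)/f(γ) ≥ M f'(0)`.
Consequently, if `θmin > 0` and `α ∈ (-(M f'(0))/((1 - M f'(0)) θmin), 1/θmin)`,
then `1 + ((1 - α θmin)/(α θmin)) (S - γ) f'(γ)/f(γ) > 0`. -/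
theorem marginal_impact_bounds
    (f : ℝ → ℝ) (M : ℝ) (hM : 0 < M)
    (hfC : ContDiff ℝ 2 f) (hfanti : Antitone f) (hfpos : ∀ γ, 0 < f γ)
    (hf0 : f 0 = 1)
    (hmono : MonotoneOn (fun γ => (M - γ) * deriv f γ / f γ) (Ico 0 M)) :
    ∀ S ∈ Ioc 0 M, ∀ γ ∈ Ico 0 S,
      ((S - γ) * deriv f γ / f γ ≤ 0 ∧
        M * deriv f 0 ≤ (S - γ) * deriv f γ / f γ) ∧
      ∀ θmin α : ℝ, 0 < θmin →
        α ∈ Ioo (-(M * deriv f 0) / ((1 - M * deriv f 0) * θmin)) (1 / θmin) →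
          0 < 1 + (1 - α * θmin) / (α * θmin) * ((S - γ) * deriv f γ / f γ) :=
  marginal_impact_bounds_general f M hM hfanti hfpos hf0 hmono
end
end

section
/- In the n-bank single-asset clearing system, consider an interval of time during which exactly the banks 1, …, k are at the regulatory threshold (i.e., θ_i(t) ≤ θ_min if and only if i ≤ k) and Γ_i(t) = 0 for i > k. Then the aggregate liquidation process Γ*(t) = Σ_{i=1}^n Γ_i(t) = Σ_{i=1}^k Γ_i(t) satisfies on this interval the single-bank ODE Γ̇*(t) = −Z*_k(t, Γ*(t)) f_t′(t) f_Γ(Γ*(t)) / (1 + Z*_k(t, Γ*(t)) f_t(t) f_Γ′(Γ*(t))), where Z*_k(t, Γ*) = ((1 − α θ_min)(Σ_{i=1}^k s_i − Γ*))/(α θ_min f_t(t) f_Γ(Γ*)), i.e., the aggregate behaves like a single bank holding Σ_{i=1}^k s_i units. -/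
/-!
The clearing ODE is `Γ̇ = -(I + c Z 1ᵀ)⁻¹ (a Z)`, with `c = f_t f_Γ'` and `a = f_t' f_Γ`. By the matrix
determinant lemma `I + c Z 1ᵀ` is invertible exactly when `1 + c Σ Zᵢ ≠ 0`, and then it acts on `Z` as
multiplication by `1 + c Σ Zᵢ`, so summing the components gives `Σ Γ̇ᵢ = -(a Σ Zᵢ) / (1 + c Σ Zᵢ)`
(in the singular case both sides are junk zeros). Since only banks `i < k` are at the threshold and
the others have `Γᵢ = 0`, `Σ Zᵢ` is exactly the single-bank `Z*_k` evaluated at the aggregate `Γ*`.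
-/

open Set Matrix

section ShermanMorrison

variable {ι K : Type*} [Fintype ι] [DecidableEq ι] [Field K]

theorem inv_one_add_vecMulVec_mulVec_self (u v : ι → K) :
    (1 + vecMulVec u v)⁻¹ *ᵥ u = (1 + v ⬝ᵥ u)⁻¹ • u := by
  have hdet : (1 + vecMulVec u v).det = 1 + v ⬝ᵥ u := by
    rw [vecMulVec_eq Unit, det_one_add_replicateCol_mul_replicateRow]
  have hmulVec : (1 + vecMulVec u v) *ᵥ u = (1 + v ⬝ᵥ u) • u := by
    rw [add_mulVec, one_mulVec, vecMulVec_mulVec, op_smul_eq_smul, add_smul, one_smul]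
  rcases eq_or_ne (1 + v ⬝ᵥ u) 0 with h | h
  · rw [nonsing_inv_apply_not_isUnit _ (by rw [hdet, h]; exact not_isUnit_zero), h,
      _root_.inv_zero, zero_smul, zero_mulVec]
  · rw [eq_inv_smul_iff₀ h, ← mulVec_smul, ← hmulVec, mulVec_mulVec,
      nonsing_inv_mul _ (by rw [hdet]; exact h.isUnit), one_mulVec]

theorem sum_inv_one_add_smul_vecMulVec_one_mulVec (u : ι → K) (c a : K) :
    ∑ i, ((1 + c • vecMulVec u (fun _ => 1))⁻¹ *ᵥ fun i => u i * a) i =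
      (∑ i, u i) * a / (1 + c * ∑ i, u i) := by
  have hu : (fun i => u i * a) = a • u := funext fun i => mul_comm (u i) a
  rw [← vecMulVec_smul, hu, mulVec_smul, inv_one_add_vecMulVec_mulVec_self]
  simp only [Pi.smul_apply, smul_eq_mul, ← Finset.mul_sum, dotProduct]
  ring

end ShermanMorrison

theorem sum_ite_mul_sub_div {ι K : Type*} [Fintype ι] [Field K] (p : ι → Prop) [DecidablePred p]
    (s Γ : ι → K) (c D : K) (hΓ : ∀ i, ¬ p i → Γ i = 0) :
    ∑ i, (if p i then c * (s i - Γ i) / D else 0) = c * (∑ i with p i, s i - ∑ i, Γ i) / D := by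
  rw [← Finset.sum_filter, ← Finset.sum_div, ← Finset.mul_sum, Finset.sum_sub_distrib,
    Finset.sum_filter_of_ne fun i _ hi => not_not.1 (mt (hΓ i) hi)]

/-- Bank `i : Fin n` is bank `i + 1` of the paper, so banks `1, …, k` are those with `(i : ℕ) < k`. -/
theorem aggregate_single_bank_ODE_general
    (n k : ℕ)
    (t₁ t₂ α θmin : ℝ)
    (s : Fin n → ℝ)
    (ft fΓ : ℝ → ℝ)
    -- the capital ratios: on `[t₁, t₂]` exactly banks `1, …, k` are at the threshold
    (θ : ℝ → Fin n → ℝ)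
    (hθ : ∀ t ∈ Icc t₁ t₂, ∀ i : Fin n, (θ t i ≤ θmin ↔ (i : ℕ) < k))
    -- the solution of the `n`-bank clearing ODE on `[t₁, t₂]`
    (Γ : ℝ → Fin n → ℝ)
    -- the map `Z` (with the regulatory-threshold indicators)
    (Z : ℝ → Fin n → ℝ)
    (hZ : ∀ t i, Z t i =
      if θ t i ≤ θmin
      then ((1 - α * θmin) * (s i - Γ t i)) / (α * θmin * ft t * fΓ (∑ j, Γ t j))
      else 0)
    -- banks that are not at the threshold have not liquidated anything
    (hΓ0 : ∀ t ∈ Icc t₁ t₂, ∀ i : Fin n, k ≤ (i : ℕ) → Γ t i = 0)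
    (hODE : ∀ t ∈ Icc t₁ t₂, HasDerivAt Γ
      (-(((1 : Matrix (Fin n) (Fin n) ℝ) +
          (ft t * deriv fΓ (∑ j, Γ t j)) • vecMulVec (Z t) (fun _ => 1))⁻¹).mulVec
        (fun i => Z t i * deriv ft t * fΓ (∑ j, Γ t j)) : Fin n → ℝ) t) :
    -- the aggregate `Γ*(t) = Σᵢ Γᵢ(t)` solves the single-bank ODE of a bank
    -- holding `Σ_{i ≤ k} sᵢ` units
    ∀ t ∈ Icc t₁ t₂, HasDerivAt (fun u => ∑ i, Γ u i)
      (-((((1 - α * θmin) *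
            ((∑ i ∈ Finset.univ.filter (fun i : Fin n => (i : ℕ) < k), s i) -
              ∑ i, Γ t i)) /
          (α * θmin * ft t * fΓ (∑ i, Γ t i))) * deriv ft t * fΓ (∑ i, Γ t i)) /
        (1 + (((1 - α * θmin) *
            ((∑ i ∈ Finset.univ.filter (fun i : Fin n => (i : ℕ) < k), s i) -
              ∑ i, Γ t i)) /
          (α * θmin * ft t * fΓ (∑ i, Γ t i))) * ft t * deriv fΓ (∑ i, Γ t i))) t := by
  intro t ht
  have hZsum : ∑ i, Z t i = ((1 - α * θmin) *
      ((∑ i ∈ Finset.univ.filter (fun i : Fin n => (i : ℕ) < k), s i) - ∑ i, Γ t i)) /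
        (α * θmin * ft t * fΓ (∑ i, Γ t i)) := by
    simp only [hZ, hθ t ht]
    exact sum_ite_mul_sub_div _ _ _ _ _ fun i hi => hΓ0 t ht i (not_lt.1 hi)
  refine (HasDerivAt.fun_sum (u := Finset.univ) fun i _ =>
    hasDerivAt_pi.1 (hODE t ht) i).congr_deriv ?_
  simp only [Pi.neg_apply, Finset.sum_neg_distrib, mul_assoc,
    sum_inv_one_add_smul_vecMulVec_one_mulVec, hZsum]
  ring

/-- **Aggregation (proof of Corollary 3.8).**
On a time interval during which exactly the banks `1, …, k` are at the regulatory
threshold (and the remaining banks have not liquidated anything), the aggregate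
liquidation process `Γ*(t) = Σᵢ Γᵢ(t)` satisfies the single-bank ODE of a bank
holding `Σ_{i≤k} sᵢ` units.  (Bank `i : Fin n` corresponds to bank `i+1` of the
paper, so "banks `1, …, k`" are the indices with `(i : ℕ) < k`.) -/
theorem aggregate_single_bank_ODE
    (n k : ℕ) (hn : 0 < n) (hk : k ≤ n)
    (t₁ t₂ α θmin : ℝ) (ht : t₁ ≤ t₂)
    (s : Fin n → ℝ) (hs : ∀ i, 0 < s i)
    (hθmin : 0 < θmin) (hα : 0 < α) (hαθ : α * θmin < 1)
    (ft fΓ : ℝ → ℝ)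
    (hftC : ContDiff ℝ 1 ft) (hftanti : AntitoneOn ft (Ici 0))
    (hftmem : ∀ t ∈ Ici (0 : ℝ), ft t ∈ Ioc (0 : ℝ) 1) (hft0 : ft 0 = 1)
    (hfΓC : ContDiff ℝ 2 fΓ) (hfΓanti : Antitone fΓ)
    (hfΓpos : ∀ γ, 0 < fΓ γ) (hfΓ0 : fΓ 0 = 1)
    -- the capital ratios: on `[t₁, t₂]` exactly banks `1, …, k` are at the threshold
    (θ : ℝ → Fin n → ℝ)
    (hθ : ∀ t ∈ Icc t₁ t₂, ∀ i : Fin n, (θ t i ≤ θmin ↔ (i : ℕ) < k))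
    -- the solution of the `n`-bank clearing ODE on `[t₁, t₂]`
    (Γ : ℝ → Fin n → ℝ)
    -- the map `Z` (with the regulatory-threshold indicators)
    (Z : ℝ → Fin n → ℝ)
    (hZ : ∀ t i, Z t i =
      if θ t i ≤ θmin
      then ((1 - α * θmin) * (s i - Γ t i)) / (α * θmin * ft t * fΓ (∑ j, Γ t j))
      else 0)
    -- banks that are not at the threshold have not liquidated anything
    (hΓ0 : ∀ t ∈ Icc t₁ t₂, ∀ i : Fin n, k ≤ (i : ℕ) → Γ t i = 0)
    (hODE : ∀ t ∈ Icc t₁ t₂, HasDerivAt Γ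
      (-(((1 : Matrix (Fin n) (Fin n) ℝ) +
          (ft t * deriv fΓ (∑ j, Γ t j)) • vecMulVec (Z t) (fun _ => 1))⁻¹).mulVec
        (fun i => Z t i * deriv ft t * fΓ (∑ j, Γ t j)) : Fin n → ℝ) t) :
    -- the aggregate `Γ*(t) = Σᵢ Γᵢ(t)` solves the single-bank ODE of a bank
    -- holding `Σ_{i ≤ k} sᵢ` units
    ∀ t ∈ Icc t₁ t₂, HasDerivAt (fun u => ∑ i, Γ u i)
      (-((((1 - α * θmin) *
            ((∑ i ∈ Finset.univ.filter (fun i : Fin n => (i : ℕ) < k), s i) -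
              ∑ i, Γ t i)) /
          (α * θmin * ft t * fΓ (∑ i, Γ t i))) * deriv ft t * fΓ (∑ i, Γ t i)) /
        (1 + (((1 - α * θmin) *
            ((∑ i ∈ Finset.univ.filter (fun i : Fin n => (i : ℕ) < k), s i) -
              ∑ i, Γ t i)) /
          (α * θmin * ft t * fΓ (∑ i, Γ t i))) * ft t * deriv fΓ (∑ i, Γ t i))) t :=
  aggregate_single_bank_ODE_general n k t₁ t₂ α θmin s ft fΓ θ hθ Γ Z hZ hΓ0 hODE
end
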